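/- arXiv:1603.06005 — 5 statements merged into one kernel-verified Lean document; each statement's English description precedes it below -/
import Mathlib

section
/- (Lemma, second bullet.) Let β > 0 and t₀ be real numbers, let φ : ℝ → ℝ be continuous, and define R_t := e^{−βt} ∫_{t₀}^t φ_u e^{βu} du for t ≥ t₀. If there is γ > 0 with φ_t = O(t^{−γ}) as t → ∞, then R_t = O(t^{−γ}) as t → ∞. -/
/-!
Splitting the integral at `t / 2` gives
`R t = e^{-βt/2} R (t / 2) + e^{-βt} ∫_{t/2}^t φ s e^{βs} ds`.
Since `φ` is bounded near infinity, so is `R`, and the first term decays exponentially.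
On `[t / 2, t]` we have `|φ| ≤ C (t / 2)^{-γ}`, and `e^{-βt} ∫_a^t e^{βs} ds ≤ 1 / β`,
so the second term is at most `C 2^γ t^{-γ} / β`.
-/

open Filter Asymptotics MeasureTheory intervalIntegral Set Real

theorem integral_exp_mul {β : ℝ} (hβ : β ≠ 0) (a b : ℝ) :
    ∫ s in a..b, exp (β * s) = (exp (β * b) - exp (β * a)) / β := by
  rw [integral_comp_mul_left (fun s => exp s) hβ, integral_exp, smul_eq_mul, inv_mul_eq_div]

noncomputable def dampedIntegral (β a : ℝ) (φ : ℝ → ℝ) (t : ℝ) : ℝ :=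
  exp (-(β * t)) * ∫ s in a..t, φ s * exp (β * s)

section

variable {β : ℝ} {φ : ℝ → ℝ}

theorem dampedIntegral_eq_add (hφ : Continuous φ) (a b t : ℝ) :
    dampedIntegral β a φ t =
      exp (-(β * (t - b))) * dampedIntegral β a φ b + dampedIntegral β b φ t := by
  have hint : Continuous fun s => φ s * exp (β * s) := by fun_prop
  rw [dampedIntegral, dampedIntegral, dampedIntegral, ← integral_add_adjacent_intervals
    (hint.intervalIntegrable a b) (hint.intervalIntegrable b t), mul_add, ← mul_assoc,
    ← exp_add]
  ring_nf

theorem abs_dampedIntegral_le (hβ : 0 < β) {a t B : ℝ} (hat : a ≤ t) (hB₀ : 0 ≤ B)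
    (hB : ∀ s ∈ Ioc a t, |φ s| ≤ B) : |dampedIntegral β a φ t| ≤ B / β := by
  have hint : ‖∫ s in a..t, φ s * exp (β * s)‖ ≤ ∫ s in a..t, B * exp (β * s) := by
    refine intervalIntegral.norm_integral_le_of_norm_le hat (Eventually.of_forall fun s hs => ?_)
      ((by fun_prop : Continuous fun s => B * exp (β * s)).intervalIntegrable _ _)
    rw [norm_mul, norm_of_nonneg (exp_pos _).le]
    exact mul_le_mul_of_nonneg_right (hB s hs) (exp_pos _).le
  rw [intervalIntegral.integral_const_mul, integral_exp_mul hβ.ne'] at hint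
  rw [dampedIntegral, abs_mul, abs_of_pos (exp_pos _)]
  calc exp (-(β * t)) * |∫ s in a..t, φ s * exp (β * s)|
      ≤ exp (-(β * t)) * (B * ((exp (β * t) - exp (β * a)) / β)) := by gcongr; exact hint
    _ ≤ exp (-(β * t)) * (B * (exp (β * t) / β)) := by gcongr; linarith [exp_pos (β * a)]
    _ = B / β * exp (-(β * t) + β * t) := by rw [exp_add]; ring
    _ = B / β := by simp

theorem dampedIntegral_isBigO_one (hβ : 0 < β) (hφ : Continuous φ)
    (hbdd : φ =O[atTop] fun _ => (1 : ℝ)) (a : ℝ) :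
    dampedIntegral β a φ =O[atTop] fun _ => (1 : ℝ) := by
  obtain ⟨B, hB₀, hB⟩ := hbdd.exists_nonneg
  obtain ⟨T, hT⟩ := eventually_atTop.mp hB.bound
  refine IsBigO.of_bound (|dampedIntegral β a φ T| + B / β) ?_
  filter_upwards [eventually_ge_atTop T] with t ht
  have hdecay : exp (-(β * (t - T))) ≤ 1 := exp_le_one_iff.mpr (by nlinarith)
  have htail : |dampedIntegral β T φ t| ≤ B / β :=
    abs_dampedIntegral_le hβ ht hB₀ fun s hs => by simpa using hT s hs.1.le
  rw [norm_one, mul_one, norm_eq_abs, dampedIntegral_eq_add hφ a T t]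
  calc |exp (-(β * (t - T))) * dampedIntegral β a φ T + dampedIntegral β T φ t|
      ≤ |exp (-(β * (t - T))) * dampedIntegral β a φ T| + |dampedIntegral β T φ t| :=
        abs_add_le _ _
    _ = exp (-(β * (t - T))) * |dampedIntegral β a φ T| + |dampedIntegral β T φ t| := by
        rw [abs_mul, abs_of_pos (exp_pos _)]
    _ ≤ |dampedIntegral β a φ T| + B / β := by
        gcongr; exact mul_le_of_le_one_left (abs_nonneg _) hdecay

theorem dampedIntegral_half_isBigO_rpow (hβ : 0 < β) {γ : ℝ} (hγ : 0 ≤ γ)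
    (hφ : φ =O[atTop] fun t : ℝ => t ^ (-γ)) :
    (fun t => dampedIntegral β (t / 2) φ t) =O[atTop] fun t : ℝ => t ^ (-γ) := by
  obtain ⟨C, hC₀, hC⟩ := hφ.exists_nonneg
  obtain ⟨T, hT⟩ := eventually_atTop.mp hC.bound
  refine IsBigO.of_bound (C * 2 ^ γ / β) ?_
  filter_upwards [eventually_ge_atTop (2 * T), eventually_gt_atTop 0] with t hTt ht
  have hbound : ∀ s ∈ Ioc (t / 2) t, |φ s| ≤ C * (t / 2) ^ (-γ) := fun s hs => by
    have hs₀ : 0 < s := by linarith [hs.1]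
    calc |φ s| ≤ C * |s ^ (-γ)| := hT s (by linarith [hs.1])
      _ = C * s ^ (-γ) := by rw [abs_of_pos (rpow_pos_of_pos hs₀ _)]
      _ ≤ C * (t / 2) ^ (-γ) := by
          gcongr C * ?_
          exact rpow_le_rpow_of_nonpos (by positivity) hs.1.le (by linarith)
  have hhalf : (t / 2) ^ (-γ) = 2 ^ γ * t ^ (-γ) := by
    rw [div_rpow ht.le zero_le_two, rpow_neg zero_le_two, div_inv_eq_mul, mul_comm]
  calc ‖dampedIntegral β (t / 2) φ t‖
      ≤ C * (t / 2) ^ (-γ) / β :=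
        abs_dampedIntegral_le hβ (by linarith) (by positivity) hbound
    _ = C * 2 ^ γ / β * ‖t ^ (-γ)‖ := by
        rw [hhalf, norm_of_nonneg (rpow_pos_of_pos ht _).le]; ring

end

theorem stmt_13
    (β t₀ : ℝ) (hβ : 0 < β)
    (φ : ℝ → ℝ) (hφc : Continuous φ)
    (γ : ℝ) (hγ : 0 < γ)
    (hφ : φ =O[atTop] fun t : ℝ => t ^ (-γ)) :
    (fun t => Real.exp (-(β * t)) * ∫ s in t₀..t, φ s * Real.exp (β * s))
      =O[atTop] fun t : ℝ => t ^ (-γ) := by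
  have hbdd : φ =O[atTop] fun _ => (1 : ℝ) := hφ.trans ((tendsto_rpow_neg_atTop hγ).isBigO_one ℝ)
  have hsplit : (fun t => exp (-(β * t)) * ∫ s in t₀..t, φ s * exp (β * s)) =
      fun t => exp (-(β / 2) * t) * dampedIntegral β t₀ φ (t / 2) + dampedIntegral β (t / 2) φ t :=
    funext fun t => by rw [← dampedIntegral, dampedIntegral_eq_add hφc t₀ (t / 2) t]; ring_nf
  rw [hsplit]
  refine IsBigO.add ?_ (dampedIntegral_half_isBigO_rpow hβ hγ.le hφ)
  simpa using (isLittleO_exp_neg_mul_rpow_atTop (half_pos hβ) (-γ)).isBigO.mul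
    ((dampedIntegral_isBigO_one hβ hφc hbdd t₀).comp_tendsto (tendsto_id.atTop_div_const two_pos))
end

section
/- (Log-convex comparison, proved inside the Lemma.) Let β > 0 and t₀ be real numbers and let φ̃ : (t₀,∞) → ℝ be continuous with φ̃_t > 0 for all t > t₀, t ↦ ln φ̃_t convex on (t₀,∞), and liminf_{t→∞} (ln φ̃_t)/t > −β. Then for any t₁ > t₀, e^{−βt} ∫_{t₁}^t φ̃_u e^{βu} du = O(φ̃_t) as t → ∞. -/
open Filter Asymptotics MeasureTheory intervalIntegral Set

private lemma slope_trans {S : Set ℝ} {g : ℝ → ℝ} (hconv : ConvexOn ℝ S g)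
    {a b s t : ℝ} (ha : a ∈ S) (hb : b ∈ S) (hs : s ∈ S) (ht : t ∈ S)
    (hab : a < b) (hbs : b ≤ s) (hst : s < t) :
    (g b - g a) / (b - a) ≤ (g t - g s) / (t - s) := by
  rcases eq_or_lt_of_le hbs with rfl | hbs
  · exact hconv.slope_mono_adjacent ha ht hab hst
  · exact (hconv.slope_mono_adjacent ha hs hab hbs).trans
      (hconv.slope_mono_adjacent hb ht hbs hst)

private lemma integral_exp_const_mul (c : ℝ) (hc : c ≠ 0) (a b : ℝ) :
    ∫ s in a..b, Real.exp (c * s) = (Real.exp (c * b) - Real.exp (c * a)) / c := by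
  have h : ∀ x ∈ Set.uIcc a b, HasDerivAt (fun s => Real.exp (c * s) / c)
      (Real.exp (c * x)) x := by
    intro x _
    have := (((hasDerivAt_id x).const_mul c).exp).div_const c
    simpa [mul_one, mul_div_cancel_right₀ _ hc] using this
  rw [intervalIntegral.integral_eq_sub_of_hasDerivAt h
    ((Real.continuous_exp.comp (continuous_const.mul continuous_id)).intervalIntegrable a b)]
  ring

theorem stmt_15
    (β t₀ : ℝ) (hβ : 0 < β)
    (φ : ℝ → ℝ)
    (hφc : ContinuousOn φ (Set.Ioi t₀))
    (hφpos : ∀ t > t₀, 0 < φ t)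
    (hφconv : ConvexOn ℝ (Set.Ioi t₀) (fun t => Real.log (φ t)))
    (hφliminf : -β < Filter.liminf (fun t => Real.log (φ t) / t) atTop) :
    ∀ t₁ > t₀,
      (fun t => Real.exp (-(β * t)) * ∫ s in t₁..t, φ s * Real.exp (β * s))
        =O[atTop] φ := by
  intro t₁ ht₁
  set g : ℝ → ℝ := fun t => Real.log (φ t) with hg
  have hcont : ContinuousOn (fun s => φ s * Real.exp (β * s)) (Set.Ioi t₀) :=
    hφc.mul ((Real.continuous_exp.comp (continuous_const.mul continuous_id)).continuousOn)
  have hint : ∀ x y : ℝ, t₀ < x → t₀ < y →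
      IntervalIntegrable (fun s => φ s * Real.exp (β * s)) volume x y := by
    intro x y hx hy
    exact (hcont.mono (Set.ordConnected_Ioi.uIcc_subset hx hy)).intervalIntegrable
  by_cases hA : ∃ a b : ℝ, t₀ < a ∧ t₀ < b ∧ a < b ∧ -β < (g b - g a) / (b - a)
  · obtain ⟨a, b, ha, hb, hab, hγ⟩ := hA
    set γ : ℝ := (g b - g a) / (b - a) with hγdef
    have hβγ : 0 < β + γ := by linarith
    set b' : ℝ := max b t₁ with hb'def
    have hb'0 : t₀ < b' := lt_of_lt_of_le hb (le_max_left _ _)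
    have ht₁b' : t₁ ≤ b' := le_max_right _ _
    have hslope : ∀ s t : ℝ, b' ≤ s → s < t → γ ≤ (g t - g s) / (t - s) := by
      intro s t hs hst
      have hbs : b ≤ s := (le_max_left b t₁).trans hs
      exact slope_trans hφconv ha hb (lt_of_lt_of_le hb hbs)
        (lt_trans (lt_of_lt_of_le hb hbs) hst) hab hbs hst
    have hglb : ∀ s t : ℝ, b' ≤ s → s < t → g s + γ * (t - s) ≤ g t := by
      intro s t hs hst
      have h := hslope s t hs hst
      have hts : 0 < t - s := by linarith
      rw [le_div_iff₀ hts] at h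
      linarith
    set K : ℝ := Real.exp (g b' - γ * b') with hK
    set C₀ : ℝ := ∫ s in t₁..b', φ s * Real.exp (β * s) with hC₀
    have hC₀nonneg : 0 ≤ C₀ := by
      apply intervalIntegral.integral_nonneg ht₁b'
      intro u hu
      have hu0 : t₀ < u := lt_of_lt_of_le ht₁ hu.1
      have := hφpos u hu0
      positivity
    have hptwise : ∀ t : ℝ, b' < t → ∀ s ∈ Set.Icc b' t,
        φ s * Real.exp (β * s) ≤ (φ t * Real.exp (-(γ * t))) * Real.exp ((β + γ) * s) := by
      intro t ht s hs
      have hs0 : t₀ < s := lt_of_lt_of_le hb'0 hs.1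
      have ht0 : t₀ < t := hb'0.trans ht
      have hφs := hφpos s hs0
      have hφt := hφpos t ht0
      have hgs : g s ≤ g t + γ * (s - t) := by
        rcases eq_or_lt_of_le hs.2 with rfl | hst
        · simp
        · have := hglb s t hs.1 hst; linarith
      have hkey : φ s ≤ φ t * Real.exp (γ * (s - t)) := by
        calc φ s = Real.exp (g s) := (Real.exp_log hφs).symm
          _ ≤ Real.exp (g t + γ * (s - t)) := Real.exp_le_exp.2 hgs
          _ = φ t * Real.exp (γ * (s - t)) := by
              rw [Real.exp_add, Real.exp_log hφt]
      calc φ s * Real.exp (β * s)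
          ≤ (φ t * Real.exp (γ * (s - t))) * Real.exp (β * s) :=
            mul_le_mul_of_nonneg_right hkey (Real.exp_nonneg _)
        _ = (φ t * Real.exp (-(γ * t))) * Real.exp ((β + γ) * s) := by
            rw [mul_assoc, mul_assoc, ← Real.exp_add, ← Real.exp_add]
            ring_nf
    have hI₂ : ∀ t : ℝ, b' < t →
        (∫ s in b'..t, φ s * Real.exp (β * s)) ≤ φ t * Real.exp (β * t) / (β + γ) := by
      intro t ht
      have ht0 : t₀ < t := hb'0.trans ht
      have hφt := hφpos t ht0
      have hint2 : IntervalIntegrable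
          (fun s => (φ t * Real.exp (-(γ * t))) * Real.exp ((β + γ) * s)) volume b' t :=
        Continuous.intervalIntegrable (by continuity) _ _
      have hm := intervalIntegral.integral_mono_on ht.le (hint b' t hb'0 ht0) hint2
        (hptwise t ht)
      rw [intervalIntegral.integral_const_mul, integral_exp_const_mul (β + γ) hβγ.ne' b' t] at hm
      have hexp : Real.exp (-(γ * t)) * Real.exp ((β + γ) * t) = Real.exp (β * t) := by
        rw [← Real.exp_add]; ring_nf
      calc (∫ s in b'..t, φ s * Real.exp (β * s))
          ≤ (φ t * Real.exp (-(γ * t))) *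
            ((Real.exp ((β + γ) * t) - Real.exp ((β + γ) * b')) / (β + γ)) := hm
        _ ≤ (φ t * Real.exp (-(γ * t))) * (Real.exp ((β + γ) * t) / (β + γ)) := by
            have h1 : Real.exp ((β + γ) * t) - Real.exp ((β + γ) * b') ≤
                Real.exp ((β + γ) * t) := by
              linarith [Real.exp_pos ((β + γ) * b')]
            gcongr
        _ = φ t * Real.exp (β * t) / (β + γ) := by
            rw [← hexp]; ring
    have hKpos : 0 < K := Real.exp_pos _
    have hlow : ∀ t : ℝ, b' < t → K * Real.exp ((β + γ) * t) ≤ φ t * Real.exp (β * t) := by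
      intro t ht
      have ht0 : t₀ < t := hb'0.trans ht
      have hφt := hφpos t ht0
      have hgt : g b' + γ * (t - b') ≤ g t := hglb b' t le_rfl ht
      calc K * Real.exp ((β + γ) * t) = Real.exp (g b' - γ * b' + (β + γ) * t) := by
            rw [hK, ← Real.exp_add]
        _ ≤ Real.exp (g t + β * t) := Real.exp_le_exp.2 (by linarith)
        _ = φ t * Real.exp (β * t) := by
            rw [Real.exp_add, Real.exp_log hφt]
    have htend : Tendsto (fun t : ℝ => K * Real.exp ((β + γ) * t)) atTop atTop := by
      apply Tendsto.const_mul_atTop hKpos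
      exact Real.tendsto_exp_atTop.comp (Tendsto.const_mul_atTop hβγ tendsto_id)
    rw [Asymptotics.isBigO_iff]
    refine ⟨1 + 1 / (β + γ), ?_⟩
    filter_upwards [eventually_gt_atTop b', htend.eventually_ge_atTop C₀] with t ht hKt
    have ht0 : t₀ < t := hb'0.trans ht
    have hφt := hφpos t ht0
    have hsplit : (∫ s in t₁..t, φ s * Real.exp (β * s))
        = C₀ + ∫ s in b'..t, φ s * Real.exp (β * s) :=
      (intervalIntegral.integral_add_adjacent_intervals (hint t₁ b' ht₁ hb'0)
        (hint b' t hb'0 ht0)).symm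
    have hI₂nonneg : 0 ≤ ∫ s in b'..t, φ s * Real.exp (β * s) := by
      apply intervalIntegral.integral_nonneg ht.le
      intro u hu
      have := hφpos u (lt_of_lt_of_le hb'0 hu.1)
      positivity
    have hIbound := hI₂ t ht
    have hC₀le : C₀ ≤ φ t * Real.exp (β * t) := le_trans hKt (hlow t ht)
    have hE : (0:ℝ) < Real.exp (-(β * t)) := Real.exp_pos _
    have hexp : Real.exp (-(β * t)) * (φ t * Real.exp (β * t)) = φ t := by
      rw [mul_comm (φ t), ← mul_assoc, ← Real.exp_add]
      simp
    rw [Real.norm_eq_abs, Real.norm_eq_abs, abs_of_pos hφt]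
    have habs : |Real.exp (-(β * t)) * ∫ s in t₁..t, φ s * Real.exp (β * s)|
        = Real.exp (-(β * t)) * ∫ s in t₁..t, φ s * Real.exp (β * s) := by
      apply abs_of_nonneg
      apply mul_nonneg hE.le
      rw [hsplit]; linarith
    rw [habs, hsplit, mul_add]
    have h1 : Real.exp (-(β * t)) * C₀ ≤ φ t := by
      calc Real.exp (-(β * t)) * C₀
          ≤ Real.exp (-(β * t)) * (φ t * Real.exp (β * t)) :=
            mul_le_mul_of_nonneg_left hC₀le hE.le
        _ = φ t := hexp
    have h2 : Real.exp (-(β * t)) * (∫ s in b'..t, φ s * Real.exp (β * s)) ≤ φ t / (β + γ) := by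
      calc Real.exp (-(β * t)) * (∫ s in b'..t, φ s * Real.exp (β * s))
          ≤ Real.exp (-(β * t)) * (φ t * Real.exp (β * t) / (β + γ)) :=
            mul_le_mul_of_nonneg_left hIbound hE.le
        _ = Real.exp (-(β * t)) * (φ t * Real.exp (β * t)) / (β + γ) := by ring
        _ = φ t / (β + γ) := by rw [hexp]
    have hring : (1 + 1 / (β + γ)) * φ t = φ t + φ t / (β + γ) := by ring
    linarith
  · push_neg at hA
    exfalso
    set f : ℝ → ℝ := fun t => g t / t with hf
    have h1 : t₀ < t₀ + 1 := by linarith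
    have h2 : t₀ < t₀ + 2 := by linarith
    set c₁ : ℝ := g (t₀ + 1) + β * (t₀ + 1) with hc₁
    set σ₀ : ℝ := (g (t₀ + 2) - g (t₀ + 1)) / ((t₀ + 2) - (t₀ + 1)) with hσ₀
    set c₂ : ℝ := g (t₀ + 2) - σ₀ * (t₀ + 2) with hc₂
    have hub : ∀ t : ℝ, t₀ + 1 < t → g t ≤ -β * t + c₁ := by
      intro t ht
      have h := hA (t₀ + 1) t h1 (h1.trans ht) ht
      have hts : 0 < t - (t₀ + 1) := by linarith
      rw [div_le_iff₀ hts] at h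
      rw [hc₁]; nlinarith
    have hlb : ∀ t : ℝ, t₀ + 2 < t → σ₀ * t + c₂ ≤ g t := by
      intro t ht
      have h := hφconv.slope_mono_adjacent (Set.mem_Ioi.2 h1) (Set.mem_Ioi.2 (h2.trans ht))
        (by linarith : t₀ + 1 < t₀ + 2) ht
      rw [← hσ₀] at h
      have hts : 0 < t - (t₀ + 2) := by linarith
      rw [le_div_iff₀ hts] at h
      rw [hc₂]; nlinarith
    have hubf : ∀ᶠ t in atTop, f t ≤ -β + c₁ / t := by
      filter_upwards [eventually_gt_atTop (max (t₀ + 1) 1)] with t ht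
      have ht1 : t₀ + 1 < t := lt_of_le_of_lt (le_max_left _ _) ht
      have ht0 : (0:ℝ) < t := by
        have := lt_of_le_of_lt (le_max_right (t₀ + 1) 1) ht; linarith
      have heq : (-β + c₁ / t) = (-β * t + c₁) / t := by field_simp
      rw [heq]
      show g t / t ≤ (-β * t + c₁) / t
      gcongr
      exact hub t ht1
    have hlbf : ∀ᶠ t in atTop, σ₀ - |c₂| ≤ f t := by
      filter_upwards [eventually_gt_atTop (max (t₀ + 2) 1)] with t ht
      have ht2 : t₀ + 2 < t := lt_of_le_of_lt (le_max_left _ _) ht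
      have ht1 : (1:ℝ) < t := lt_of_le_of_lt (le_max_right _ _) ht
      have ht0 : (0:ℝ) < t := by linarith
      have hstep : σ₀ + c₂ / t ≤ f t := by
        have heq : (σ₀ + c₂ / t) = (σ₀ * t + c₂) / t := by field_simp
        rw [heq]
        show (σ₀ * t + c₂) / t ≤ g t / t
        gcongr
        exact hlb t ht2
      have habs : -|c₂| ≤ c₂ / t := by
        have h3 : |c₂ / t| ≤ |c₂| := by
          rw [abs_div, abs_of_pos ht0]
          exact div_le_self (abs_nonneg _) ht1.le
        linarith [neg_abs_le (c₂ / t)]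
      linarith
    have hvlim : Tendsto (fun t : ℝ => -β + c₁ / t) atTop (nhds (-β)) := by
      have h0 : Tendsto (fun t : ℝ => c₁ / t) atTop (nhds 0) :=
        Tendsto.div_atTop tendsto_const_nhds tendsto_id
      simpa using tendsto_const_nhds.add h0
    have hliminf_le : Filter.liminf f atTop ≤ -β := by
      have hv : Filter.liminf (fun t : ℝ => -β + c₁ / t) atTop = -β := hvlim.liminf_eq
      rw [← hv]
      exact Filter.liminf_le_liminf hubf (isBoundedUnder_of_eventually_ge hlbf)
        (hvlim.isBoundedUnder_le.isCoboundedUnder_ge)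
    exact absurd hφliminf (not_lt.2 hliminf_le)
end

section
/- (Remark after the Theorems.) The function Φ defined by Φ(x) = ω'(x) ∫₀^x (e^{−2y}/ω'(y)²) (∫_{−∞}^y ω'(z)² e^{2z} dz) dy is the unique solution of the boundary value problem Φ''(x) + 2Φ'(x) + (1 − 2ω(x))Φ(x) = ω'(x) for all x ∈ ℝ, Φ(0) = 0, and Φ(x) → 0 as x → −∞. -/
/-!
Write `u = 1 - ω` and `L f = f'' + 2 f' + (1 - 2 ω) f`. Differentiating the wave equation shows
`L ω' = 0`, so by reduction of order `Φ = ω' ∫₀ˣ g` solves `L Φ = ω'` as soon as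
`g = e^{-2y} ω'(y)⁻² ∫_{-∞}^y ω'² e^{2z} dz` solves the first-order equation
`(ω'² e^{2y} g)' = ω'² e^{2y}`, which is how `g` is built.

The logarithmic derivative `q = u'/u` obeys the Riccati equation `q' = ω - 2q - q²`. Barrier
arguments give `q ≤ 1/2` everywhere and `q ≥ 1/4` near `-∞`, so near `-∞` both `u` and `-ω'`
are comparable to exponentials with rates in `[1/4, 1/2]`. Then `g` is bounded near `-∞`, hence
`Φ = O(|x| e^{x/4}) → 0`. For uniqueness, the difference `D` of two solutions satisfies `L D = 0`
and `D 0 = 0`; Abel's identity makes `D = W ω' ∫₀ˣ e^{-2y} ω'⁻²`, and the exponential bounds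
show that this second solution grows like `e^{-2x}` at `-∞`, forcing `W = 0`.
-/

open Filter Asymptotics MeasureTheory intervalIntegral Set

open Real Topology

theorem forall_le_lt_of_deriv_pos_of_lt {f f' : ℝ → ℝ} {a y : ℝ}
    (hf : ∀ t, HasDerivAt f (f' t) t) (hpos : ∀ t ≤ y, f t < a → 0 < f' t) (hy : f y < a) :
    ∀ x ≤ y, f x < a := by
  intro x hxy
  by_contra! hx
  have hcont : Continuous f := continuous_iff_continuousAt.2 fun t => (hf t).continuousAt
  obtain ⟨s, ⟨⟨hxs, hsy⟩, hs⟩, hs_max⟩ :=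
    (isCompact_Icc.inter_right (isClosed_Ici.preimage hcont)).exists_isGreatest
      (⟨x, ⟨le_rfl, hxy⟩, hx⟩ : (Icc x y ∩ f ⁻¹' Ici a).Nonempty)
  have hsy' : s < y := hsy.lt_of_ne (by rintro rfl; exact (not_le.2 hy) hs)
  have hmono : StrictMonoOn f (Icc s y) := by
    refine strictMonoOn_of_deriv_pos (convex_Icc s y) hcont.continuousOn fun t ht => ?_
    rw [interior_Icc] at ht
    have hft : f t < a := not_le.1 fun h =>
      (not_le.2 ht.1) (hs_max ⟨⟨hxs.trans ht.1.le, ht.2.le⟩, h⟩)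
    rw [(hf t).deriv]
    exact hpos t ht.2.le hft
  exact (not_le.2 hy)
    ((mem_Ici.1 hs).trans (hmono ⟨le_rfl, hsy'.le⟩ ⟨hsy'.le, le_rfl⟩ hsy').le)

theorem tendsto_atBot_of_le_deriv_on_Iic {f f' : ℝ → ℝ} {c y : ℝ} (hc : 0 < c)
    (hf : ∀ t ≤ y, HasDerivAt f (f' t) t) (hf' : ∀ t ≤ y, c ≤ f' t) :
    Tendsto f atBot atBot := by
  have hgrowth : ∀ x ≤ y, c * (y - x) ≤ f y - f x := by
    intro x hx
    refine (convex_Iic y).mul_sub_le_image_sub_of_le_deriv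
      (fun t ht => (hf t ht).continuousAt.continuousWithinAt)
      (fun t ht => (hf t (interior_subset (s := Iic y) ht)).differentiableAt.differentiableWithinAt)
      (fun t ht => ?_) x hx y self_mem_Iic hx
    have ht' : t ≤ y := interior_subset (s := Iic y) ht
    rw [(hf t ht').deriv]
    exact hf' t ht'
  refine tendsto_atBot_mono' atBot ?_ (tendsto_atBot_add_const_right _ (f y - c * y)
    (tendsto_id.const_mul_atBot hc))
  filter_upwards [eventually_le_atBot y] with x hx
  simp only [id]
  linarith [hgrowth x hx]

theorem monotoneOn_mul_exp_neg_of_mul_le {u u' : ℝ → ℝ} {c : ℝ} {s : Set ℝ}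
    (hs : Convex ℝ s) (hu : ∀ x, HasDerivAt u (u' x) x) (h : ∀ x ∈ s, c * u x ≤ u' x) :
    MonotoneOn (fun x => u x * exp (-(c * x))) s := by
  have hd : ∀ x, HasDerivAt (fun x => u x * exp (-(c * x)))
      ((u' x - c * u x) * exp (-(c * x))) x := fun x =>
    ((hu x).fun_mul ((hasDerivAt_const_mul c).fun_neg.exp)).congr_deriv (by ring)
  refine monotoneOn_of_deriv_nonneg hs
    (fun x _ => (hd x).continuousAt.continuousWithinAt)
    (fun x _ => (hd x).differentiableAt.differentiableWithinAt) fun x hx => ?_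
  rw [(hd x).deriv]
  exact mul_nonneg (sub_nonneg.2 (h x (interior_subset hx))) (exp_pos _).le

theorem antitoneOn_mul_exp_neg_of_le_mul {u u' : ℝ → ℝ} {c : ℝ} {s : Set ℝ}
    (hs : Convex ℝ s) (hu : ∀ x, HasDerivAt u (u' x) x) (h : ∀ x ∈ s, u' x ≤ c * u x) :
    AntitoneOn (fun x => u x * exp (-(c * x))) s := by
  have := monotoneOn_mul_exp_neg_of_mul_le (u := fun x => -u x) hs (fun x => (hu x).neg)
    fun x hx => by linarith [h x hx]
  intro x hx y hy hxy
  have := this hx hy hxy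
  simp only [neg_mul] at this
  linarith

theorem tendsto_sub_mul_mul_exp_atBot (a c : ℝ) {k : ℝ} (hk : 0 < k) :
    Tendsto (fun x => (a - c * x) * exp (k * x)) atBot (𝓝 0) := by
  have hlin : Tendsto (fun x : ℝ => -(k * x)) atBot atTop :=
    tendsto_neg_atBot_atTop.comp (tendsto_id.const_mul_atBot hk)
  have h1 := (tendsto_pow_mul_exp_neg_atTop_nhds_zero 1).comp hlin
  have h2 := tendsto_exp_atBot.comp (tendsto_id.const_mul_atBot hk)
  convert (h2.const_mul a).add (h1.const_mul (c / k)) using 1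
  · funext x
    simp only [Function.comp, pow_one, neg_neg, id]
    field_simp
    ring
  · simp

theorem le_mul_exp_of_mul_exp_neg_le {a b c x y : ℝ}
    (h : a * exp (-(c * x)) ≤ b * exp (-(c * y))) : a ≤ b * exp (c * (x - y)) := by
  have := mul_le_mul_of_nonneg_right h (exp_pos (c * x)).le
  rwa [mul_assoc, ← exp_add, neg_add_cancel, exp_zero, mul_one, mul_assoc, ← exp_add,
    show -(c * y) + c * x = c * (x - y) by ring] at this

structure SolvesLinearODE (p : ℝ) (c r f : ℝ → ℝ) : Prop where
  differentiable : Differentiable ℝ f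
  differentiable_deriv : Differentiable ℝ (deriv f)
  eq : ∀ x, deriv (deriv f) x + p * deriv f x + c x * f x = r x

namespace SolvesLinearODE

variable {p : ℝ} {c r f g : ℝ → ℝ}

theorem of_contDiff (hf : ContDiff ℝ 2 f)
    (heq : ∀ x, deriv (deriv f) x + p * deriv f x + c x * f x = r x) :
    SolvesLinearODE p c r f where
  differentiable := hf.differentiable (by norm_num)
  differentiable_deriv := hf.differentiable_deriv_two
  eq := heq

theorem sub (hf : SolvesLinearODE p c r f) (hg : SolvesLinearODE p c r g) :
    SolvesLinearODE p c 0 (f - g) := by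
  have hd : deriv (f - g) = deriv f - deriv g :=
    funext fun x => deriv_sub (hf.differentiable x) (hg.differentiable x)
  have hdd : deriv (deriv (f - g)) = deriv (deriv f) - deriv (deriv g) := by
    rw [hd]
    exact funext fun x => deriv_sub (hf.differentiable_deriv x) (hg.differentiable_deriv x)
  refine ⟨hf.differentiable.sub hg.differentiable, ?_, fun x => ?_⟩
  · rw [hd]
    exact hf.differentiable_deriv.sub hg.differentiable_deriv
  · rw [hdd, hd]
    simp only [Pi.sub_apply, Pi.zero_apply]
    linear_combination hf.eq x - hg.eq x

theorem eq_zero (hf : SolvesLinearODE p c 0 f) (x : ℝ) :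
    deriv (deriv f) x + p * deriv f x + c x * f x = 0 :=
  hf.eq x

theorem hasDerivAt (hf : SolvesLinearODE p c r f) (x : ℝ) : HasDerivAt f (deriv f x) x :=
  (hf.differentiable x).hasDerivAt

theorem hasDerivAt_deriv (hf : SolvesLinearODE p c r f) (x : ℝ) :
    HasDerivAt (deriv f) (deriv (deriv f) x) x :=
  (hf.differentiable_deriv x).hasDerivAt

theorem wronskian_eq (hf : SolvesLinearODE p c 0 f) (hg : SolvesLinearODE p c 0 g) (x : ℝ) :
    deriv f x * g x - f x * deriv g x = (deriv f 0 * g 0 - f 0 * deriv g 0) * exp (-(p * x)) := by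
  set V := fun t => (deriv f t * g t - f t * deriv g t) * exp (p * t)
  have hV : ∀ t, HasDerivAt V 0 t := fun t => by
    have := (((hf.hasDerivAt_deriv t).fun_mul (hg.hasDerivAt t)).fun_sub
      ((hf.hasDerivAt t).fun_mul (hg.hasDerivAt_deriv t))).fun_mul (hasDerivAt_const_mul p).exp
    refine this.congr_deriv ?_
    linear_combination (exp (p * t)) * (g t * hf.eq_zero t - f t * hg.eq_zero t)
  have hconst := is_const_of_deriv_eq_zero (fun t => (hV t).differentiableAt)
    (fun t => (hV t).deriv) x 0
  simp only [V, mul_zero, exp_zero, mul_one] at hconst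
  rw [← hconst, mul_assoc, ← exp_add, add_neg_cancel, exp_zero, mul_one]

theorem eq_mul_integral (hf : SolvesLinearODE p c 0 f) (hg : SolvesLinearODE p c 0 g)
    (hg0 : ∀ x, g x ≠ 0) (hf0 : f 0 = 0) :
    ∃ W, ∀ x, f x = W * (g x * ∫ y in (0:ℝ)..x, exp (-(p * y)) / g y ^ 2) := by
  set W := deriv f 0 * g 0 - f 0 * deriv g 0
  refine ⟨W, fun x => ?_⟩
  have hquot : ∀ y, HasDerivAt (fun t => f t / g t) (W * (exp (-(p * y)) / g y ^ 2)) y :=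
    fun y => ((hf.hasDerivAt y).div (hg.hasDerivAt y) (hg0 y)).congr_deriv (by
      rw [hf.wronskian_eq hg y]
      ring)
  have hcont : Continuous fun y => W * (exp (-(p * y)) / g y ^ 2) :=
    continuous_const.mul ((continuous_const.mul continuous_id).neg.rexp.div
      (hg.differentiable.continuous.pow 2) fun y => pow_ne_zero 2 (hg0 y))
  have hFTC := integral_eq_sub_of_hasDerivAt (fun y _ => hquot y) (hcont.intervalIntegrable 0 x)
  rw [intervalIntegral.integral_const_mul, hf0, zero_div, sub_zero] at hFTC
  rw [← mul_assoc, mul_comm W, mul_assoc, hFTC]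
  field_simp [hg0 x]

theorem mul_primitive {v J h h' : ℝ → ℝ} (hv : SolvesLinearODE p c 0 v)
    (hJ : ∀ x, HasDerivAt J (h x) x) (hh : ∀ x, HasDerivAt h (h' x) x)
    (hvh : ∀ x, v x * h' x + (2 * deriv v x + p * v x) * h x = r x) :
    SolvesLinearODE p c r (fun x => v x * J x) := by
  have hd : ∀ x, HasDerivAt (fun x => v x * J x) (deriv v x * J x + v x * h x) x :=
    fun x => (hv.hasDerivAt x).fun_mul (hJ x)
  have hdd : ∀ x, HasDerivAt (fun x => deriv v x * J x + v x * h x)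
      (deriv (deriv v) x * J x + 2 * deriv v x * h x + v x * h' x) x := fun x =>
    (((hv.hasDerivAt_deriv x).fun_mul (hJ x)).fun_add
      ((hv.hasDerivAt x).fun_mul (hh x))).congr_deriv (by ring)
  have hderiv : deriv (fun x => v x * J x) = fun x => deriv v x * J x + v x * h x :=
    funext fun x => (hd x).deriv
  refine ⟨fun x => (hd x).differentiableAt, hderiv ▸ fun x => (hdd x).differentiableAt,
    fun x => ?_⟩
  rw [hderiv, (hdd x).deriv]
  linear_combination J x * hv.eq_zero x + hvh x

end SolvesLinearODE

structure IsDecreasingKPPWave (ω : ℝ → ℝ) : Prop where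
  contDiff : ContDiff ℝ 2 ω
  ode : ∀ x, deriv (deriv ω) x + 2 * deriv ω x + ω x - ω x ^ 2 = 0
  tendsto_atBot : Tendsto ω atBot (𝓝 1)
  deriv_neg : ∀ x, deriv ω x < 0

/-- The logarithmic derivative of `1 - ω`. It tends to `√2 - 1`, the positive root of
`λ² + 2λ - 1 = 0`, at `-∞`; the bounds `1/4 ≤ decayRate ω ≤ 1/2` below bracket that limit. -/
noncomputable def decayRate (ω : ℝ → ℝ) (x : ℝ) : ℝ := deriv ω x / (ω x - 1)

noncomputable def phiIntegrand (ω : ℝ → ℝ) (y : ℝ) : ℝ :=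
  exp (-(2 * y)) / deriv ω y ^ 2 * ∫ z in Iic y, deriv ω z ^ 2 * exp (2 * z)

noncomputable def phi (ω : ℝ → ℝ) (x : ℝ) : ℝ :=
  deriv ω x * ∫ y in (0:ℝ)..x, phiIntegrand ω y

theorem phiIntegrand_nonneg (ω : ℝ → ℝ) (y : ℝ) : 0 ≤ phiIntegrand ω y :=
  mul_nonneg (by positivity) (setIntegral_nonneg measurableSet_Iic fun _ _ => by positivity)

theorem phi_zero (ω : ℝ → ℝ) : phi ω 0 = 0 := by
  simp [phi]

namespace IsDecreasingKPPWave

variable {ω : ℝ → ℝ} {b x y : ℝ}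

theorem hasDerivAt (hω : IsDecreasingKPPWave ω) (x : ℝ) : HasDerivAt ω (deriv ω x) x :=
  (hω.contDiff.differentiable (by norm_num) x).hasDerivAt

theorem deriv_deriv_eq (hω : IsDecreasingKPPWave ω) (x : ℝ) :
    deriv (deriv ω) x = ω x ^ 2 - ω x - 2 * deriv ω x := by
  linarith [hω.ode x]

theorem hasDerivAt_deriv (hω : IsDecreasingKPPWave ω) (x : ℝ) :
    HasDerivAt (deriv ω) (deriv (deriv ω) x) x :=
  (hω.contDiff.differentiable_deriv_two x).hasDerivAt

theorem continuous_deriv (hω : IsDecreasingKPPWave ω) : Continuous (deriv ω) :=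
  continuous_iff_continuousAt.2 fun x => (hω.hasDerivAt_deriv x).continuousAt

theorem hasDerivAt_deriv_deriv (hω : IsDecreasingKPPWave ω) (x : ℝ) :
    HasDerivAt (deriv (deriv ω))
      (2 * ω x * deriv ω x - deriv ω x - 2 * deriv (deriv ω) x) x := by
  have h := (((hω.hasDerivAt x).fun_pow 2).fun_sub (hω.hasDerivAt x)).fun_sub
    ((hω.hasDerivAt_deriv x).const_mul 2)
  refine (h.congr_of_eventuallyEq (Eventually.of_forall hω.deriv_deriv_eq)).congr_deriv ?_
  push_cast
  ring

theorem solvesLinearODE_deriv (hω : IsDecreasingKPPWave ω) :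
    SolvesLinearODE 2 (fun x => 1 - 2 * ω x) 0 (deriv ω) where
  differentiable x := (hω.hasDerivAt_deriv x).differentiableAt
  differentiable_deriv x := (hω.hasDerivAt_deriv_deriv x).differentiableAt
  eq x := by
    rw [(hω.hasDerivAt_deriv_deriv x).deriv, Pi.zero_apply]
    ring

theorem strictAnti (hω : IsDecreasingKPPWave ω) : StrictAnti ω :=
  strictAnti_of_deriv_neg hω.deriv_neg

theorem deriv_ne_zero (hω : IsDecreasingKPPWave ω) (x : ℝ) : deriv ω x ≠ 0 :=
  (hω.deriv_neg x).ne

theorem one_sub_pos (hω : IsDecreasingKPPWave ω) (x : ℝ) : 0 < 1 - ω x := by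
  have hle : ω (x - 1) ≤ 1 := ge_of_tendsto hω.tendsto_atBot <| by
    filter_upwards [eventually_le_atBot (x - 1)] with t ht using hω.strictAnti.antitone ht
  linarith [hω.strictAnti (show x - 1 < x by linarith)]

theorem neg_deriv_eq (hω : IsDecreasingKPPWave ω) (x : ℝ) :
    -deriv ω x = decayRate ω x * (1 - ω x) := by
  have := (hω.one_sub_pos x).ne'
  rw [decayRate, div_mul_eq_mul_div, eq_div_iff (by contrapose! this; linarith)]
  ring

theorem decayRate_pos (hω : IsDecreasingKPPWave ω) (x : ℝ) : 0 < decayRate ω x :=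
  div_pos_of_neg_of_neg (hω.deriv_neg x) (by linarith [hω.one_sub_pos x])

theorem hasDerivAt_decayRate (hω : IsDecreasingKPPWave ω) (x : ℝ) :
    HasDerivAt (decayRate ω) (ω x - 2 * decayRate ω x - decayRate ω x ^ 2) x := by
  have hne : ω x - 1 ≠ 0 := by linarith [hω.one_sub_pos x]
  refine ((hω.hasDerivAt_deriv x).fun_div ((hω.hasDerivAt x).sub_const 1) hne).congr_deriv ?_
  rw [decayRate, hω.deriv_deriv_eq]
  field_simp

/-- Above `1/2` the Riccati equation makes `decayRate ω` increase to the left and its inverse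
decrease to the left at slope at least `1`, so the inverse would turn negative. -/
theorem decayRate_le_half (hω : IsDecreasingKPPWave ω) (x : ℝ) : decayRate ω x ≤ 1 / 2 := by
  by_contra! hx
  have hlarge : ∀ t ≤ x, 1 / 2 < decayRate ω t := by
    have := forall_le_lt_of_deriv_pos_of_lt (f := fun t => -decayRate ω t) (a := -(1 / 2)) (y := x)
      (fun t => (hω.hasDerivAt_decayRate t).fun_neg)
      (fun t _ ht => by nlinarith [hω.one_sub_pos t]) (by linarith)
    exact fun t ht => by linarith [this t ht]
  have hinv := tendsto_atBot_of_le_deriv_on_Iic one_pos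
    (fun t _ => (hω.hasDerivAt_decayRate t).inv (hω.decayRate_pos t).ne') fun t ht => by
      have := hlarge t ht
      rw [le_div_iff₀ (by positivity)]
      nlinarith [hω.one_sub_pos t]
  obtain ⟨t, ht⟩ := (hinv.eventually (eventually_le_atBot 0)).exists
  exact (inv_pos.2 (hω.decayRate_pos t)).not_ge ht

/-- Where `ω > 3/4`, below `1/4` the Riccati equation forces slope at least `3/16`, so
`decayRate ω` would stay below `1/4` to the left and then turn negative. -/
theorem eventually_quarter_le_decayRate (hω : IsDecreasingKPPWave ω) :
    ∀ᶠ x in atBot, 1 / 4 ≤ decayRate ω x := by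
  obtain ⟨b, hb⟩ := (hω.tendsto_atBot.eventually
    (lt_mem_nhds (by norm_num : (3 / 4 : ℝ) < 1))).exists_forall_of_atBot
  filter_upwards [eventually_le_atBot b] with x hxb
  by_contra! hx
  have hriccati : ∀ t ≤ x, decayRate ω t < 1 / 4 →
      3 / 16 ≤ ω t - 2 * decayRate ω t - decayRate ω t ^ 2 :=
    fun t ht hq => by nlinarith [hb t (ht.trans hxb), hω.decayRate_pos t]
  have hsmall := forall_le_lt_of_deriv_pos_of_lt hω.hasDerivAt_decayRate
    (fun t ht hq => by linarith [hriccati t ht hq]) hx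
  have hq := tendsto_atBot_of_le_deriv_on_Iic (by norm_num : (0 : ℝ) < 3 / 16)
    (fun t _ => hω.hasDerivAt_decayRate t) fun t ht => hriccati t ht (hsmall t ht)
  obtain ⟨t, ht⟩ := (hq.eventually (eventually_le_atBot 0)).exists
  exact (hω.decayRate_pos t).not_ge ht

theorem hasDerivAt_one_sub (hω : IsDecreasingKPPWave ω) (x : ℝ) :
    HasDerivAt (fun x => 1 - ω x) (decayRate ω x * (1 - ω x)) x :=
  ((hω.hasDerivAt x).const_sub 1).congr_deriv (hω.neg_deriv_eq x)

theorem one_sub_le_mul_exp (hω : IsDecreasingKPPWave ω) (hxy : x ≤ y) :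
    1 - ω y ≤ (1 - ω x) * exp (1 / 2 * (y - x)) :=
  le_mul_exp_of_mul_exp_neg_le <| antitoneOn_mul_exp_neg_of_le_mul convex_univ
    hω.hasDerivAt_one_sub
    (fun t _ => mul_le_mul_of_nonneg_right (hω.decayRate_le_half t) (hω.one_sub_pos t).le)
    (mem_univ x) (mem_univ y) hxy

theorem one_sub_le_mul_exp_of_le (hω : IsDecreasingKPPWave ω)
    (hb : ∀ t ≤ b, 1 / 4 ≤ decayRate ω t) (hxy : x ≤ y) (hyb : y ≤ b) :
    1 - ω x ≤ (1 - ω y) * exp (1 / 4 * (x - y)) :=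
  le_mul_exp_of_mul_exp_neg_le <| monotoneOn_mul_exp_neg_of_mul_le (convex_Iic b)
    hω.hasDerivAt_one_sub (fun t ht => mul_le_mul_of_nonneg_right (hb t ht) (hω.one_sub_pos t).le)
    (hxy.trans hyb) hyb hxy

theorem neg_deriv_le (hω : IsDecreasingKPPWave ω) (x : ℝ) : -deriv ω x ≤ (1 - ω x) / 2 := by
  rw [hω.neg_deriv_eq]
  nlinarith [hω.decayRate_le_half x, hω.one_sub_pos x]

theorem le_neg_deriv (hω : IsDecreasingKPPWave ω) (hb : ∀ t ≤ b, 1 / 4 ≤ decayRate ω t)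
    (hx : x ≤ b) : (1 - ω x) / 4 ≤ -deriv ω x := by
  rw [hω.neg_deriv_eq]
  nlinarith [hb x hx, hω.one_sub_pos x]

theorem deriv_sq_le (hω : IsDecreasingKPPWave ω) (x : ℝ) :
    deriv ω x ^ 2 ≤ (1 - ω x) ^ 2 / 4 := by
  nlinarith [hω.neg_deriv_le x, hω.deriv_neg x]

theorem deriv_sq_mul_exp_le (hω : IsDecreasingKPPWave ω)
    (hb : ∀ t ≤ b, 1 / 4 ≤ decayRate ω t) (hxy : x ≤ y) (hyb : y ≤ b) :
    deriv ω x ^ 2 * exp (2 * x) ≤ (1 - ω y) ^ 2 * exp (-(1 / 2 * y)) / 4 * exp (5 / 2 * x) := by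
  have hu := hω.one_sub_le_mul_exp_of_le hb hxy hyb
  have hsq : (1 - ω x) ^ 2 ≤ ((1 - ω y) * exp (1 / 4 * (x - y))) ^ 2 :=
    pow_le_pow_left₀ (hω.one_sub_pos x).le hu 2
  calc deriv ω x ^ 2 * exp (2 * x)
      ≤ ((1 - ω y) * exp (1 / 4 * (x - y))) ^ 2 / 4 * exp (2 * x) := by
        gcongr
        exact (hω.deriv_sq_le x).trans (by gcongr)
    _ = (1 - ω y) ^ 2 * exp (-(1 / 2 * y)) / 4 * exp (5 / 2 * x) := by
        rw [mul_pow, ← exp_nat_mul, mul_div_right_comm, mul_assoc, ← exp_add,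
          mul_div_right_comm, mul_assoc _ (exp _), ← exp_add]
        ring_nf

theorem continuous_deriv_sq_mul_exp (hω : IsDecreasingKPPWave ω) :
    Continuous fun z => deriv ω z ^ 2 * exp (2 * z) :=
  (hω.continuous_deriv.pow 2).mul (continuous_const.mul continuous_id).rexp

theorem integrableOn_deriv_sq_mul_exp (hω : IsDecreasingKPPWave ω) (y : ℝ) :
    IntegrableOn (fun z => deriv ω z ^ 2 * exp (2 * z)) (Iic y) := by
  obtain ⟨b, hb⟩ := hω.eventually_quarter_le_decayRate.exists_forall_of_atBot
  have hcont := hω.continuous_deriv_sq_mul_exp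
  have hIb : IntegrableOn (fun z => deriv ω z ^ 2 * exp (2 * z)) (Iic b) := by
    refine Integrable.mono' ((integrableOn_exp_mul_Iic (by norm_num : (0:ℝ) < 5 / 2) b).const_mul
      ((1 - ω b) ^ 2 * exp (-(1 / 2 * b)) / 4)) hcont.aestronglyMeasurable.restrict ?_
    filter_upwards [ae_restrict_mem measurableSet_Iic] with z hz
    rw [Real.norm_of_nonneg (by positivity)]
    exact hω.deriv_sq_mul_exp_le hb hz le_rfl
  refine (hIb.union (hcont.integrableOn_Icc (a := b) (b := y))).mono_set fun z hz => ?_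
  rcases le_total z b with h | h
  exacts [Or.inl h, Or.inr ⟨h, hz⟩]

theorem integral_deriv_sq_mul_exp_le (hω : IsDecreasingKPPWave ω)
    (hb : ∀ t ≤ b, 1 / 4 ≤ decayRate ω t) (hyb : y ≤ b) :
    ∫ z in Iic y, deriv ω z ^ 2 * exp (2 * z) ≤ (1 - ω y) ^ 2 * exp (2 * y) / 10 := by
  calc _ ≤ ∫ z in Iic y, (1 - ω y) ^ 2 * exp (-(1 / 2 * y)) / 4 * exp (5 / 2 * z) :=
        setIntegral_mono_on (hω.integrableOn_deriv_sq_mul_exp y)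
          ((integrableOn_exp_mul_Iic (by norm_num) y).const_mul _) measurableSet_Iic
          fun z hz => hω.deriv_sq_mul_exp_le hb hz hyb
    _ = (1 - ω y) ^ 2 * exp (2 * y) / 10 := by
        rw [MeasureTheory.integral_const_mul, integral_exp_mul_Iic (by norm_num),
          show 2 * y = -(1 / 2 * y) + 5 / 2 * y by ring, exp_add]
        ring

theorem hasDerivAt_integral_deriv_sq_mul_exp (hω : IsDecreasingKPPWave ω) (y : ℝ) :
    HasDerivAt (fun t => ∫ z in Iic t, deriv ω z ^ 2 * exp (2 * z))
      (deriv ω y ^ 2 * exp (2 * y)) y := by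
  have hcont := hω.continuous_deriv_sq_mul_exp
  have hsplit : (fun t => ∫ z in Iic t, deriv ω z ^ 2 * exp (2 * z)) = fun t =>
      (∫ z in Iic 0, deriv ω z ^ 2 * exp (2 * z)) +
        ∫ z in (0:ℝ)..t, deriv ω z ^ 2 * exp (2 * z) := by
    funext t
    rw [← integral_Iic_sub_Iic (hω.integrableOn_deriv_sq_mul_exp 0)
      (hω.integrableOn_deriv_sq_mul_exp t), add_sub_cancel]
  rw [hsplit]
  exact ((hcont.integral_hasStrictDerivAt 0 y).hasDerivAt).const_add _

theorem phiIntegrand_le (hω : IsDecreasingKPPWave ω) (hb : ∀ t ≤ b, 1 / 4 ≤ decayRate ω t)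
    (hyb : y ≤ b) : phiIntegrand ω y ≤ 2 := by
  have hu := hω.one_sub_pos y
  have hd : (1 - ω y) ^ 2 / 16 ≤ deriv ω y ^ 2 := by
    nlinarith [hω.le_neg_deriv hb hyb]
  have hpos : 0 < deriv ω y ^ 2 := pow_two_pos_of_ne_zero (hω.deriv_ne_zero y)
  calc phiIntegrand ω y
      ≤ exp (-(2 * y)) / deriv ω y ^ 2 * ((1 - ω y) ^ 2 * exp (2 * y) / 10) := by
        unfold phiIntegrand
        gcongr
        exact hω.integral_deriv_sq_mul_exp_le hb hyb
    _ = (1 - ω y) ^ 2 / (10 * deriv ω y ^ 2) := by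
        rw [exp_neg]
        field_simp
    _ ≤ 2 := by
        rw [div_le_iff₀ (by positivity)]
        nlinarith

theorem hasDerivAt_phiIntegrand (hω : IsDecreasingKPPWave ω) (y : ℝ) :
    HasDerivAt (phiIntegrand ω)
      (1 - 2 * (deriv (deriv ω) y + deriv ω y) / deriv ω y * phiIntegrand ω y) y := by
  have hne := hω.deriv_ne_zero y
  have hexp : HasDerivAt (fun t => exp (-(2 * t))) (exp (-(2 * y)) * -2) y :=
    (hasDerivAt_const_mul 2).fun_neg.exp
  refine ((hexp.fun_div ((hω.hasDerivAt_deriv y).fun_pow 2) (pow_ne_zero 2 hne)).fun_mul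
    (hω.hasDerivAt_integral_deriv_sq_mul_exp y)).congr_deriv ?_
  unfold phiIntegrand
  rw [exp_neg]
  field_simp
  ring

theorem continuous_phiIntegrand (hω : IsDecreasingKPPWave ω) : Continuous (phiIntegrand ω) :=
  continuous_iff_continuousAt.2 fun y => (hω.hasDerivAt_phiIntegrand y).continuousAt

theorem solvesLinearODE_phi (hω : IsDecreasingKPPWave ω) :
    SolvesLinearODE 2 (fun x => 1 - 2 * ω x) (deriv ω) (phi ω) :=
  hω.solvesLinearODE_deriv.mul_primitive
    (fun x => (hω.continuous_phiIntegrand.integral_hasStrictDerivAt 0 x).hasDerivAt)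
    hω.hasDerivAt_phiIntegrand fun x => by
      have := hω.deriv_ne_zero x
      field_simp
      ring

theorem abs_integral_phiIntegrand_le (hω : IsDecreasingKPPWave ω)
    (hb : ∀ t ≤ b, 1 / 4 ≤ decayRate ω t) (hx : x ≤ b) :
    |∫ y in (0:ℝ)..x, phiIntegrand ω y| ≤
      |∫ y in (0:ℝ)..b, phiIntegrand ω y| + 2 * (b - x) := by
  have hi := hω.continuous_phiIntegrand.intervalIntegrable (μ := volume)
  have hle : ∫ y in x..b, phiIntegrand ω y ≤ 2 * (b - x) := by
    calc _ ≤ ∫ _ in x..b, (2 : ℝ) :=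
          integral_mono_on hx (hi x b) intervalIntegrable_const fun y hy =>
            hω.phiIntegrand_le hb hy.2
      _ = 2 * (b - x) := by simp [mul_comm]
  have hge : 0 ≤ ∫ y in x..b, phiIntegrand ω y :=
    integral_nonneg hx fun y _ => phiIntegrand_nonneg ω y
  rw [← integral_add_adjacent_intervals (hi 0 b) (hi b x), integral_symm x b]
  calc _ ≤ |∫ y in (0:ℝ)..b, phiIntegrand ω y| + |-∫ y in x..b, phiIntegrand ω y| :=
        abs_add_le _ _
    _ ≤ _ := by rw [abs_neg, abs_of_nonneg hge]; linarith

theorem tendsto_phi_atBot (hω : IsDecreasingKPPWave ω) : Tendsto (phi ω) atBot (𝓝 0) := by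
  obtain ⟨b, hb⟩ := hω.eventually_quarter_le_decayRate.exists_forall_of_atBot
  set A := |∫ y in (0:ℝ)..b, phiIntegrand ω y|
  set C := (1 - ω b) / 2 * exp (-(1 / 4 * b))
  have hbound : ∀ x ≤ b, ‖phi ω x‖ ≤ C * ((A + 2 * b - 2 * x) * exp (1 / 4 * x)) := by
    intro x hx
    have hv : |deriv ω x| ≤ (1 - ω b) / 2 * exp (1 / 4 * (x - b)) := by
      rw [abs_of_neg (hω.deriv_neg x)]
      linarith [hω.neg_deriv_le x, hω.one_sub_le_mul_exp_of_le hb hx le_rfl]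
    rw [Real.norm_eq_abs, phi, abs_mul]
    calc _ ≤ (1 - ω b) / 2 * exp (1 / 4 * (x - b)) * (A + 2 * (b - x)) :=
          mul_le_mul hv (hω.abs_integral_phiIntegrand_le hb hx) (abs_nonneg _)
            (by have := hω.one_sub_pos b; positivity)
      _ = _ := by
          rw [show 1 / 4 * (x - b) = -(1 / 4 * b) + 1 / 4 * x by ring, exp_add]
          ring
  have hlim := (tendsto_sub_mul_mul_exp_atBot (A + 2 * b) 2
    (by norm_num : (0:ℝ) < 1 / 4)).const_mul C
  rw [mul_zero] at hlim
  refine squeeze_zero_norm' ?_ hlim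
  filter_upwards [eventually_le_atBot b] with x hx using hbound x hx

theorem le_exp_div_deriv_sq (hω : IsDecreasingKPPWave ω) (hxy : x ≤ y) (hyx : y ≤ x + 1) :
    4 * exp (-(2 * x + 3)) / (1 - ω x) ^ 2 ≤ exp (-(2 * y)) / deriv ω y ^ 2 := by
  have hsq : deriv ω y ^ 2 ≤ (1 - ω x) ^ 2 * exp 1 / 4 := by
    have hexp : exp (1 / 2 * (y - x)) ^ 2 ≤ exp 1 := by
      rw [← exp_nat_mul, exp_le_exp]
      push_cast
      linarith
    calc deriv ω y ^ 2 ≤ (1 - ω y) ^ 2 / 4 := hω.deriv_sq_le y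
      _ ≤ ((1 - ω x) * exp (1 / 2 * (y - x))) ^ 2 / 4 := by
          gcongr
          exacts [(hω.one_sub_pos y).le, hω.one_sub_le_mul_exp hxy]
      _ ≤ (1 - ω x) ^ 2 * exp 1 / 4 := by
          rw [mul_pow]
          gcongr
  have hux := hω.one_sub_pos x
  calc 4 * exp (-(2 * x + 3)) / (1 - ω x) ^ 2
      = exp (-(2 * x + 2)) / ((1 - ω x) ^ 2 * exp 1 / 4) := by
        rw [show -(2 * x + 3) = -(2 * x + 2) + -1 by ring, exp_add, exp_neg 1]
        field_simp
    _ ≤ exp (-(2 * y)) / deriv ω y ^ 2 :=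
        div_le_div₀ (exp_pos _).le (exp_le_exp.2 (by linarith))
          (pow_two_pos_of_ne_zero (hω.deriv_ne_zero y)) hsq

theorem le_integral_exp_div_deriv_sq (hω : IsDecreasingKPPWave ω) (hx : x ≤ -1) :
    4 * exp (-(2 * x + 3)) / (1 - ω x) ^ 2 ≤ ∫ y in x..0, exp (-(2 * y)) / deriv ω y ^ 2 := by
  have hcont : Continuous fun y => exp (-(2 * y)) / deriv ω y ^ 2 :=
    (continuous_const.mul continuous_id).neg.rexp.div (hω.continuous_deriv.pow 2)
      fun y => pow_ne_zero 2 (hω.deriv_ne_zero y)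
  have htail : 0 ≤ ∫ y in (x + 1)..0, exp (-(2 * y)) / deriv ω y ^ 2 :=
    integral_nonneg (by linarith) fun y _ => by positivity
  calc _ = ∫ _ in x..(x + 1), 4 * exp (-(2 * x + 3)) / (1 - ω x) ^ 2 := by simp
    _ ≤ ∫ y in x..(x + 1), exp (-(2 * y)) / deriv ω y ^ 2 :=
        integral_mono_on (by linarith) intervalIntegrable_const (hcont.intervalIntegrable _ _)
          fun y hy => hω.le_exp_div_deriv_sq hy.1 hy.2
    _ ≤ ∫ y in x..0, exp (-(2 * y)) / deriv ω y ^ 2 := by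
        rw [← integral_add_adjacent_intervals (hcont.intervalIntegrable x (x + 1))
          (hcont.intervalIntegrable (x + 1) 0)]
        linarith

theorem tendsto_deriv_mul_integral_atTop (hω : IsDecreasingKPPWave ω) :
    Tendsto (fun x => deriv ω x * ∫ y in (0:ℝ)..x, exp (-(2 * y)) / deriv ω y ^ 2)
      atBot atTop := by
  obtain ⟨b, hb⟩ := hω.eventually_quarter_le_decayRate.exists_forall_of_atBot
  have hlow : ∀ x ≤ min b (-1), exp (-(2 * x + 3)) / (1 - ω b) ≤
      deriv ω x * ∫ y in (0:ℝ)..x, exp (-(2 * y)) / deriv ω y ^ 2 := by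
    intro x hx
    have hxb := hx.trans (min_le_left _ _)
    have hux := hω.one_sub_pos x
    rw [integral_symm, mul_neg, ← neg_mul]
    calc _ ≤ exp (-(2 * x + 3)) / (1 - ω x) :=
          div_le_div_of_nonneg_left (exp_pos _).le hux (by linarith [hω.strictAnti.antitone hxb])
      _ = (1 - ω x) / 4 * (4 * exp (-(2 * x + 3)) / (1 - ω x) ^ 2) := by
          field_simp
      _ ≤ _ := mul_le_mul (hω.le_neg_deriv hb hxb)
          (hω.le_integral_exp_div_deriv_sq (hx.trans (min_le_right _ _))) (by positivity)
          (by linarith [hω.deriv_neg x])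
  have hlin : Tendsto (fun x : ℝ => -(2 * x + 3)) atBot atTop :=
    tendsto_neg_atBot_atTop.comp
      (tendsto_atBot_add_const_right _ 3 (tendsto_id.const_mul_atBot two_pos))
  refine tendsto_atTop_mono' atBot ?_
    ((tendsto_exp_atTop.comp hlin).atTop_div_const (hω.one_sub_pos b))
  filter_upwards [eventually_le_atBot (min b (-1))] with x hx using hlow x hx

end IsDecreasingKPPWave

theorem stmt_16_general
    (ω : ℝ → ℝ)
    (hω_smooth : ContDiff ℝ 2 ω)
    (hω_eq : ∀ x, deriv (deriv ω) x + 2 * deriv ω x + ω x - (ω x) ^ 2 = 0)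
    (hω_bot : Tendsto ω atBot (nhds 1))
    (hω_deriv : ∀ x, deriv ω x < 0)
    (Φ : ℝ → ℝ)
    (hΦ : ∀ x, Φ x = deriv ω x *
      ∫ y in (0:ℝ)..x, (Real.exp (-(2 * y)) / (deriv ω y) ^ 2) *
        ∫ z in Set.Iic y, (deriv ω z) ^ 2 * Real.exp (2 * z))
    :
    (∀ x, deriv (deriv Φ) x + 2 * deriv Φ x + (1 - 2 * ω x) * Φ x = deriv ω x) ∧
    Φ 0 = 0 ∧
    Tendsto Φ atBot (nhds 0) ∧
    ∀ Ψ : ℝ → ℝ, ContDiff ℝ 2 Ψ →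
      (∀ x, deriv (deriv Ψ) x + 2 * deriv Ψ x + (1 - 2 * ω x) * Ψ x = deriv ω x) →
      Ψ 0 = 0 → Tendsto Ψ atBot (nhds 0) → Ψ = Φ := by
  have hω : IsDecreasingKPPWave ω := ⟨hω_smooth, hω_eq, hω_bot, hω_deriv⟩
  obtain rfl : Φ = phi ω := funext hΦ
  refine ⟨hω.solvesLinearODE_phi.eq, phi_zero ω, hω.tendsto_phi_atBot,
    fun Ψ hΨ hΨeq hΨ0 hΨbot => ?_⟩
  have hD := (SolvesLinearODE.of_contDiff hΨ hΨeq).sub hω.solvesLinearODE_phi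
  obtain ⟨W, hW⟩ := hD.eq_mul_integral hω.solvesLinearODE_deriv hω.deriv_ne_zero
    (by simp [hΨ0, phi_zero])
  have hW0 : W = 0 := by
    by_contra hW0
    have hlim : Tendsto (fun x => (Ψ - phi ω) x / W) atBot (𝓝 0) := by
      simpa using (hΨbot.sub hω.tendsto_phi_atBot).div_const W
    refine not_tendsto_nhds_of_tendsto_atTop hω.tendsto_deriv_mul_integral_atTop 0 ?_
    simpa [hW, hW0] using hlim
  funext x
  simpa [hW0, sub_eq_zero] using hW x

theorem stmt_16
    (ω : ℝ → ℝ)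
    (hω_smooth : ContDiff ℝ 2 ω)
    (hω_eq : ∀ x, deriv (deriv ω) x + 2 * deriv ω x + ω x - (ω x) ^ 2 = 0)
    (hω_bot : Tendsto ω atBot (nhds 1))
    (hω_top : Tendsto ω atTop (nhds 0))
    (hω_half : ω 0 = 1 / 2)
    (hω_deriv : ∀ x, deriv ω x < 0)
    (Φ : ℝ → ℝ)
    (hΦ : ∀ x, Φ x = deriv ω x *
      ∫ y in (0:ℝ)..x, (Real.exp (-(2 * y)) / (deriv ω y) ^ 2) *
        ∫ z in Set.Iic y, (deriv ω z) ^ 2 * Real.exp (2 * z))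
    :
    (∀ x, deriv (deriv Φ) x + 2 * deriv Φ x + (1 - 2 * ω x) * Φ x = deriv ω x) ∧
    Φ 0 = 0 ∧
    Tendsto Φ atBot (nhds 0) ∧
    ∀ Ψ : ℝ → ℝ, ContDiff ℝ 2 Ψ →
      (∀ x, deriv (deriv Ψ) x + 2 * deriv Ψ x + (1 - 2 * ω x) * Ψ x = deriv ω x) →
      Ψ 0 = 0 → Tendsto Ψ atBot (nhds 0) → Ψ = Φ :=
  stmt_16_general ω hω_smooth hω_eq hω_bot hω_deriv Φ hΦ
end

section
/- (Uniqueness of Ψ in the proof of Theorem 2.) Fix α ∈ (0,1), let W^α be the unique real number with ω(W^α) = α, and set ω̃(x) := ω(W^α + x). Then the function Ψ(x) = ω̃'(x) e^x ∫₀^x (ω̃'(y)² e^{2y})^{−1} (∫_{−∞}^y ω̃'(z)² e^{2z} dz) dy is the unique function satisfying Ψ''(x) − 2ω̃(x)Ψ(x) = ω̃'(x) e^x for all x ∈ ℝ, Ψ(0) = 0, and Ψ bounded on (−∞, 0]. Moreover Ψ(x) = e^x [ Φ(W^α + x) − (Φ(W^α)/ω'(W^α)) ω'(W^α + x) ], where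 Φ(x) = ω'(x) ∫₀^x (e^{−2y}/ω'(y)²) (∫_{−∞}^y ω'(z)² e^{2z} dz) dy. -/
/-!
`U(x) = ω'(x) eˣ` solves the homogeneous equation `U'' = 2ωU` (differentiate the travelling-wave
equation), so by reduction of order `Ψ = U ∫₀ˣ G / U²` with `G(y) = ∫_{-∞}^y U²` solves
`Ψ'' - 2ωΨ = U`. Since the Wronskian of two solutions of `D'' = qD` is constant, a solution of the
homogeneous equation vanishing at `0` is a multiple of `U ∫₀ˣ U⁻²`, and this function is unbounded
on `(-∞, 0]` for every nonvanishing `U`; this gives uniqueness among bounded solutions.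

Boundedness of `Ψ` needs `G ≤ U²` near `-∞`. A comparison argument for the Riccati equation of
`(1 - ω) / (-ω')` gives `-ω' < (1 - ω) / 2`, which makes `ω'² eˣ` increasing where `ω ≥ 3/4`, and
then `G(y) = ∫_{-∞}^y ω'² e^z · e^z dz ≤ ω'(y)² e^y · e^y = U(y)²`.
The formula through `Φ` is the change of variables `z ↦ Wα + z`.
-/

open Filter MeasureTheory intervalIntegral Set Real

theorem lt_of_pos_of_deriv_ge_of_le {f f' : ℝ → ℝ} {a c δ : ℝ} (hδ : 0 < δ)
    (hf : ∀ x < a, HasDerivAt f (f' x) x) (hpos : ∀ x < a, 0 < f x)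
    (hf' : ∀ x < a, f x ≤ c → δ ≤ f' x) {x : ℝ} (hx : x < a) : c < f x := by
  by_contra! hfx
  have hfx_pos := hpos x hx
  set T := 2 * f x / δ with hT_def
  have hT : 0 ≤ T := by positivity
  have hlt : ∀ t, 0 ≤ t → x - t < a := fun t ht => by linarith
  have hg : ∀ t, 0 ≤ t → HasDerivAt (fun t => f (x - t)) (-f' (x - t)) t :=
    fun t ht => (hf (x - t) (hlt t ht)).comp_const_sub x t
  have hB : ∀ t, HasDerivAt (fun t => f x - δ / 2 * t) (-(δ / 2)) t := fun t => by
    simpa using ((hasDerivAt_id t).const_mul (δ / 2)).const_sub (f x)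
  -- Running backwards in time, `f` falls at least as fast as this line, which reaches `0` at `T`.
  have hfence := image_le_of_deriv_right_lt_deriv_boundary (a := 0) (b := T)
    (fun t ht => (hg t ht.1).continuousAt.continuousWithinAt)
    (fun t ht => (hg t ht.1).hasDerivWithinAt) (by simp) hB
    (fun t ht heq => by
      have hle : f (x - t) ≤ c := by nlinarith [ht.1]
      linarith [hf' _ (hlt t ht.1) hle])
    ⟨hT, le_rfl⟩
  have hzero : f x - δ / 2 * T = 0 := by rw [hT_def]; field_simp; ring
  linarith [hpos (x - T) (hlt T hT)]

theorem hasDerivAt_setIntegral_Iic {f : ℝ → ℝ} (hf : Continuous f)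
    (hint : ∀ y, IntegrableOn f (Iic y)) (y : ℝ) :
    HasDerivAt (fun t => ∫ z in Iic t, f z) (f y) y := by
  have hsplit : (fun t => ∫ z in Iic t, f z)
      = fun t => (∫ z in (0:ℝ)..t, f z) + ∫ z in Iic 0, f z := by
    funext t
    rw [← integral_Iic_sub_Iic (hint 0) (hint t), sub_add_cancel]
  rw [hsplit]
  exact (hf.integral_hasStrictDerivAt 0 y).hasDerivAt.add_const _

theorem setIntegral_Iic_comp_const_add (f : ℝ → ℝ) (c y : ℝ) :
    ∫ z in Iic y, f (c + z) = ∫ z in Iic (c + y), f z := by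
  have hpre : (fun z => c + z) ⁻¹' Iic (c + y) = Iic y := by ext; simp
  rw [← hpre]
  exact (measurePreserving_add_left volume c).setIntegral_preimage_emb
    (measurableEmbedding_addLeft c) f _

theorem mul_exp_sq (a x : ℝ) : (a * exp x) ^ 2 = a ^ 2 * exp (2 * x) := by
  rw [mul_pow, ← exp_nat_mul]; norm_num

noncomputable def reductionOfOrder (U G : ℝ → ℝ) (x : ℝ) : ℝ :=
  U x * ∫ y in (0:ℝ)..x, (U y ^ 2)⁻¹ * G y

section ReductionOfOrder

variable {U U' q G g : ℝ → ℝ}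

theorem continuous_inv_sq_mul (hU : Continuous U) (hU0 : ∀ x, U x ≠ 0) (hG : Continuous G) :
    Continuous fun y => (U y ^ 2)⁻¹ * G y :=
  ((hU.pow 2).inv₀ fun y => pow_ne_zero 2 (hU0 y)).mul hG

theorem hasDerivAt_reductionOfOrder (hU : ∀ x, HasDerivAt U (U' x) x) (hU0 : ∀ x, U x ≠ 0)
    (hG : Continuous G) (x : ℝ) :
    HasDerivAt (reductionOfOrder U G)
      (U' x * (∫ y in (0:ℝ)..x, (U y ^ 2)⁻¹ * G y) + G x / U x) x := by
  have hUc : Continuous U := continuous_iff_continuousAt.2 fun x => (hU x).continuousAt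
  refine ((hU x).mul ((continuous_inv_sq_mul hUc hU0 hG).integral_hasStrictDerivAt 0 x
    ).hasDerivAt).congr_deriv ?_
  field_simp [hU0 x]

theorem hasDerivAt_deriv_reductionOfOrder (hU : ∀ x, HasDerivAt U (U' x) x)
    (hU' : ∀ x, HasDerivAt U' (q x * U x) x) (hU0 : ∀ x, U x ≠ 0)
    (hG : ∀ x, HasDerivAt G (g x) x) (x : ℝ) :
    HasDerivAt (deriv (reductionOfOrder U G)) (q x * reductionOfOrder U G x + g x / U x) x := by
  have hUc : Continuous U := continuous_iff_continuousAt.2 fun x => (hU x).continuousAt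
  have hGc : Continuous G := continuous_iff_continuousAt.2 fun x => (hG x).continuousAt
  rw [funext fun x => (hasDerivAt_reductionOfOrder hU hU0 hGc x).deriv]
  refine (((hU' x).mul ((continuous_inv_sq_mul hUc hU0 hGc).integral_hasStrictDerivAt 0 x
    ).hasDerivAt).add ((hG x).div (hU x) (hU0 x))).congr_deriv ?_
  simp only [reductionOfOrder]
  field_simp [hU0 x]
  ring

-- The Wronskian `D'U - DU'` is constant, and `(D / U)' = W / U²`.
theorem eq_mul_reductionOfOrder_one {D D' : ℝ → ℝ} (hU : ∀ x, HasDerivAt U (U' x) x)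
    (hU' : ∀ x, HasDerivAt U' (q x * U x) x) (hU0 : ∀ x, U x ≠ 0)
    (hD : ∀ x, HasDerivAt D (D' x) x) (hD' : ∀ x, HasDerivAt D' (q x * D x) x) (hD0 : D 0 = 0) :
    D = fun x => D' 0 * U 0 * reductionOfOrder U 1 x := by
  have hUc : Continuous U := continuous_iff_continuousAt.2 fun x => (hU x).continuousAt
  set W := D' 0 * U 0
  have hwronskian : ∀ x, D' x * U x - D x * U' x = W := by
    have hW : ∀ x, HasDerivAt (fun x => D' x * U x - D x * U' x) 0 x := fun x =>
      (((hD' x).mul (hU x)).sub ((hD x).mul (hU' x))).congr_deriv (by ring)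
    intro x
    rw [is_const_of_deriv_eq_zero (fun x => (hW x).differentiableAt) (fun x => (hW x).deriv) x 0,
      hD0, zero_mul, sub_zero]
  have hquot : ∀ x, HasDerivAt
      (fun x => D x / U x - W * ∫ y in (0:ℝ)..x, (U y ^ 2)⁻¹ * (1 : ℝ → ℝ) y) 0 x := fun x =>
    (((hD x).div (hU x) (hU0 x)).sub
      (((continuous_inv_sq_mul (G := 1) hUc hU0 continuous_one).integral_hasStrictDerivAt 0 x
        ).hasDerivAt.const_mul W)).congr_deriv (by
      rw [← hwronskian x]
      simp only [Pi.one_apply, mul_one]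
      field_simp
      ring)
  funext x
  have hx := is_const_of_deriv_eq_zero (fun x => (hquot x).differentiableAt)
    (fun x => (hquot x).deriv) x 0
  simp only [hD0, zero_div, integral_same, mul_zero, sub_zero, sub_eq_zero] at hx
  rw [reductionOfOrder, ← mul_assoc, mul_comm _ (U x), mul_assoc, ← hx]
  field_simp [hU0 x]

theorem not_bddOn_Iic_reductionOfOrder_one (hU : Continuous U) (hU0 : ∀ x, U x ≠ 0) :
    ¬ ∃ M, ∀ x ≤ 0, |reductionOfOrder U 1 x| ≤ M := by
  rintro ⟨M, hM⟩
  have hρ : Continuous fun y => (U y ^ 2)⁻¹ := (hU.pow 2).inv₀ fun y => pow_ne_zero 2 (hU0 y)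
  set F : ℝ → ℝ := fun x => -∫ y in (0:ℝ)..x, (U y ^ 2)⁻¹
  have hF : ∀ x, HasDerivAt F (-(U x ^ 2)⁻¹) x := fun x =>
    (hρ.integral_hasStrictDerivAt 0 x).hasDerivAt.neg
  have hFpos : ∀ x < 0, 0 < F x := fun x hx => by
    simp only [F, ← integral_symm]
    exact intervalIntegral_pos_of_pos (hρ.intervalIntegrable _ _)
      (fun y => by have := hU0 y; positivity) hx
  have hUF : ∀ x ≤ 0, (U x * F x) ^ 2 ≤ max M 1 ^ 2 := fun x hx => by
    have := (hM x hx).trans (le_max_left M 1)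
    rw [reductionOfOrder] at this
    simp only [Pi.one_apply, mul_one] at this
    rw [← sq_abs]
    refine pow_le_pow_left₀ (abs_nonneg _) ?_ 2
    simpa [F, abs_mul] using this
  -- `1 / F` grows at rate at least `1 / M²`, so it cannot stay positive on all of `(-∞, 0)`.
  have key := lt_of_pos_of_deriv_ge_of_le (f := fun x => (F x)⁻¹) (a := 0) (c := (F (-1))⁻¹)
    (δ := 1 / max M 1 ^ 2) (by positivity)
    (fun x hx => (hF x).fun_inv (hFpos x hx).ne') (fun x hx => inv_pos.2 (hFpos x hx))
    (fun x hx _ => by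
      have hUx := hU0 x
      have hFx := (hFpos x hx).ne'
      rw [neg_neg, show (U x ^ 2)⁻¹ / F x ^ 2 = 1 / (U x * F x) ^ 2 by field_simp]
      exact one_div_le_one_div_of_le (by positivity) (hUF x hx.le))
    (show (-1 : ℝ) < 0 by norm_num)
  exact lt_irrefl _ key

theorem eq_zero_of_bddOn_Iic {D D' : ℝ → ℝ} (hU : ∀ x, HasDerivAt U (U' x) x)
    (hU' : ∀ x, HasDerivAt U' (q x * U x) x) (hU0 : ∀ x, U x ≠ 0)
    (hD : ∀ x, HasDerivAt D (D' x) x) (hD' : ∀ x, HasDerivAt D' (q x * D x) x) (hD0 : D 0 = 0)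
    (hbdd : ∃ M, ∀ x ≤ 0, |D x| ≤ M) : D = 0 := by
  have hUc : Continuous U := continuous_iff_continuousAt.2 fun x => (hU x).continuousAt
  have hrepr := eq_mul_reductionOfOrder_one hU hU' hU0 hD hD' hD0
  obtain ⟨M, hM⟩ := hbdd
  by_cases hW : D' 0 * U 0 = 0
  · rw [hrepr]; funext x; simp [hW]
  · refine absurd ⟨M / |D' 0 * U 0|, fun x hx => ?_⟩ (not_bddOn_Iic_reductionOfOrder_one hUc hU0)
    rw [le_div_iff₀ (abs_pos.2 hW), mul_comm, ← abs_mul]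
    simpa [hrepr] using hM x hx

theorem reductionOfOrder_comp_const_add (hU : Continuous U) (hU0 : ∀ x, U x ≠ 0)
    (hG : Continuous G) {a : ℝ} (ha : a ≠ 0) (c x : ℝ) :
    reductionOfOrder (fun x => a * U (c + x)) (fun y => a ^ 2 * G (c + y)) x
      = a * (reductionOfOrder U G (c + x) - U (c + x) / U c * reductionOfOrder U G c) := by
  have hρ := continuous_inv_sq_mul hU hU0 hG
  have hint : ∫ y in (0:ℝ)..x, ((a * U (c + y)) ^ 2)⁻¹ * (a ^ 2 * G (c + y))
      = (∫ y in (0:ℝ)..c + x, (U y ^ 2)⁻¹ * G y) - ∫ y in (0:ℝ)..c, (U y ^ 2)⁻¹ * G y := by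
    have hcancel : ∀ y, ((a * U (c + y)) ^ 2)⁻¹ * (a ^ 2 * G (c + y))
        = (U (c + y) ^ 2)⁻¹ * G (c + y) := fun y => by
      have := hU0 (c + y)
      field_simp
    simp_rw [hcancel]
    rw [intervalIntegral.integral_comp_add_left (fun y => (U y ^ 2)⁻¹ * G y) c, add_zero]
    exact (integral_interval_sub_left (hρ.intervalIntegrable _ _) (hρ.intervalIntegrable _ _)).symm
  rw [reductionOfOrder, hint, reductionOfOrder, reductionOfOrder]
  field_simp [hU0 c]

end ReductionOfOrder

structure IsKPPFront (ω : ℝ → ℝ) : Prop where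
  contDiff : ContDiff ℝ 2 ω
  ode : ∀ x, deriv (deriv ω) x + 2 * deriv ω x + ω x - ω x ^ 2 = 0
  tendsto_atBot : Tendsto ω atBot (nhds 1)
  deriv_neg : ∀ x, deriv ω x < 0

noncomputable def tiltedDeriv (ω : ℝ → ℝ) (x : ℝ) : ℝ := deriv ω x * exp x

noncomputable def tiltedDerivSqIntegral (ω : ℝ → ℝ) (y : ℝ) : ℝ :=
  ∫ z in Iic y, tiltedDeriv ω z ^ 2

-- For the shifted profile `ω̃ = ω (Wα + ·)` this is the paper's `Ψ`.
noncomputable def kppPsi (ω : ℝ → ℝ) : ℝ → ℝ :=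
  reductionOfOrder (tiltedDeriv ω) (tiltedDerivSqIntegral ω)

theorem kppPsi_zero (ω : ℝ → ℝ) : kppPsi ω 0 = 0 := by
  simp [kppPsi, reductionOfOrder]

theorem tiltedDeriv_comp_const_add (ω : ℝ → ℝ) (c x : ℝ) :
    tiltedDeriv (fun z => ω (c + z)) x = exp (-c) * tiltedDeriv ω (c + x) := by
  rw [tiltedDeriv, tiltedDeriv, deriv_comp_const_add, ← mul_assoc, mul_comm (exp (-c)),
    mul_assoc, ← exp_add, neg_add_cancel_left]

theorem tiltedDerivSqIntegral_comp_const_add (ω : ℝ → ℝ) (c y : ℝ) :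
    tiltedDerivSqIntegral (fun z => ω (c + z)) y
      = exp (-c) ^ 2 * tiltedDerivSqIntegral ω (c + y) := by
  simp only [tiltedDerivSqIntegral, tiltedDeriv_comp_const_add, mul_pow,
    MeasureTheory.integral_const_mul]
  rw [setIntegral_Iic_comp_const_add (fun z => tiltedDeriv ω z ^ 2)]

theorem eq_exp_neg_mul_kppPsi {ω Φ : ℝ → ℝ} (hΦ : ∀ x, Φ x = deriv ω x *
      ∫ y in (0:ℝ)..x, (exp (-(2 * y)) / deriv ω y ^ 2) *
        ∫ z in Iic y, deriv ω z ^ 2 * exp (2 * z)) (x : ℝ) :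
    Φ x = exp (-x) * kppPsi ω x := by
  have hρ : ∀ y, exp (-(2 * y)) / deriv ω y ^ 2 * ∫ z in Iic y, deriv ω z ^ 2 * exp (2 * z)
      = (tiltedDeriv ω y ^ 2)⁻¹ * tiltedDerivSqIntegral ω y := fun y => by
    simp only [tiltedDerivSqIntegral, tiltedDeriv, mul_exp_sq, exp_neg, mul_inv, div_eq_mul_inv]
    ring
  simp_rw [hΦ, hρ]
  rw [kppPsi, reductionOfOrder, tiltedDeriv, exp_neg]
  field_simp

namespace IsKPPFront

variable {ω : ℝ → ℝ}

theorem differentiable (h : IsKPPFront ω) : Differentiable ℝ ω :=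
  h.contDiff.differentiable two_ne_zero

theorem hasDerivAt_deriv (h : IsKPPFront ω) (x : ℝ) :
    HasDerivAt (deriv ω) (ω x ^ 2 - ω x - 2 * deriv ω x) x := by
  have := (h.contDiff.differentiable_deriv_two x).hasDerivAt
  rwa [show deriv (deriv ω) x = ω x ^ 2 - ω x - 2 * deriv ω x by linarith [h.ode x]] at this

theorem lt_one (h : IsKPPFront ω) (x : ℝ) : ω x < 1 :=
  have hanti : StrictAnti ω := strictAnti_of_deriv_neg h.deriv_neg
  (hanti (sub_one_lt x)).trans_le (hanti.antitone.ge_of_tendsto h.tendsto_atBot _)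

theorem comp_const_add (h : IsKPPFront ω) (c : ℝ) : IsKPPFront fun x => ω (c + x) := by
  have hderiv : ∀ f : ℝ → ℝ, deriv (fun x => f (c + x)) = fun x => deriv f (c + x) :=
    fun f => funext fun x => deriv_comp_const_add f c x
  refine ⟨h.contDiff.comp (contDiff_const.add contDiff_id), fun x => ?_, ?_, fun x => ?_⟩
  · rw [hderiv, hderiv]; exact h.ode (c + x)
  · exact h.tendsto_atBot.comp (tendsto_atBot_add_const_left _ c tendsto_id)
  · rw [hderiv]; exact h.deriv_neg (c + x)

/-- `r = (1 - ω) / (-ω')` solves `r' = 1 + 2r - ω r²`, so `r' ≥ 1` wherever `r ≤ 2`; a positive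
function with that property cannot have `r ≤ 2` anywhere. -/
theorem neg_deriv_lt (h : IsKPPFront ω) (x : ℝ) : -deriv ω x < (1 - ω x) / 2 := by
  set r : ℝ → ℝ := fun x => (ω x - 1) / deriv ω x
  have hr_pos : ∀ x, 0 < r x := fun x =>
    div_pos_of_neg_of_neg (by linarith [h.lt_one x]) (h.deriv_neg x)
  have hr : ∀ x, HasDerivAt r (1 + 2 * r x - ω x * r x ^ 2) x := fun x => by
    have hx := (h.deriv_neg x).ne
    refine (((h.differentiable x).hasDerivAt.sub_const 1).div (h.hasDerivAt_deriv x) hx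
      ).congr_deriv ?_
    simp only [r]
    field_simp
    ring
  have h2 : 2 < r x := lt_of_pos_of_deriv_ge_of_le one_pos (a := x + 1)
    (fun y _ => hr y) (fun y _ => hr_pos y)
    (fun y _ hy => by nlinarith [hr_pos y, h.lt_one y]) (lt_add_one x)
  have := (lt_div_iff_of_neg (h.deriv_neg x)).1 h2
  linarith

theorem differentiable_tiltedDeriv (h : IsKPPFront ω) : Differentiable ℝ (tiltedDeriv ω) :=
  h.contDiff.differentiable_deriv_two.mul differentiable_exp

theorem hasDerivAt_deriv_tiltedDeriv (h : IsKPPFront ω) (x : ℝ) :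
    HasDerivAt (deriv (tiltedDeriv ω)) (2 * ω x * tiltedDeriv ω x) x := by
  have hU : ∀ x, HasDerivAt (tiltedDeriv ω) ((ω x ^ 2 - ω x - deriv ω x) * exp x) x := fun x =>
    ((h.hasDerivAt_deriv x).mul (hasDerivAt_exp x)).congr_deriv (by ring)
  rw [funext fun x => (hU x).deriv]
  have hω := (h.differentiable x).hasDerivAt
  refine ((((hω.fun_pow 2).fun_sub hω).fun_sub (h.hasDerivAt_deriv x)).fun_mul
    (hasDerivAt_exp x)).congr_deriv ?_
  simp only [tiltedDeriv]
  ring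

theorem tiltedDeriv_ne_zero (h : IsKPPFront ω) (x : ℝ) : tiltedDeriv ω x ≠ 0 :=
  mul_ne_zero (h.deriv_neg x).ne (exp_ne_zero x)

theorem abs_tiltedDeriv_le (h : IsKPPFront ω) {x y : ℝ} (hxy : x ≤ y) :
    |tiltedDeriv ω x| ≤ (1 - ω y) / 2 * exp x := by
  have hanti : Antitone ω := (strictAnti_of_deriv_neg h.deriv_neg).antitone
  rw [tiltedDeriv, abs_mul, abs_of_neg (h.deriv_neg x), abs_of_pos (exp_pos x)]
  gcongr
  linarith [h.neg_deriv_lt x, hanti hxy]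

theorem integrableOn_tiltedDeriv_sq (h : IsKPPFront ω) (c : ℝ) :
    IntegrableOn (fun z => tiltedDeriv ω z ^ 2) (Iic c) := by
  refine Integrable.mono' ((integrableOn_exp_Iic c).const_mul (((1 - ω c) / 2) ^ 2 * exp c))
    ((h.differentiable_tiltedDeriv.continuous.pow 2).aestronglyMeasurable)
    ((ae_restrict_iff' measurableSet_Iic).2 (Eventually.of_forall fun z hz => ?_))
  have hU := h.abs_tiltedDeriv_le hz
  have hexp : exp z ≤ exp c := exp_le_exp.2 hz
  rw [Real.norm_eq_abs, abs_pow]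
  calc |tiltedDeriv ω z| ^ 2 ≤ ((1 - ω c) / 2 * exp z) ^ 2 :=
        pow_le_pow_left₀ (abs_nonneg _) hU 2
    _ = ((1 - ω c) / 2) ^ 2 * exp z * exp z := by ring
    _ ≤ ((1 - ω c) / 2) ^ 2 * exp c * exp z := by gcongr

theorem hasDerivAt_tiltedDerivSqIntegral (h : IsKPPFront ω) (y : ℝ) :
    HasDerivAt (tiltedDerivSqIntegral ω) (tiltedDeriv ω y ^ 2) y :=
  hasDerivAt_setIntegral_Iic (h.differentiable_tiltedDeriv.continuous.pow 2)
    h.integrableOn_tiltedDeriv_sq y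

theorem monotoneOn_deriv_sq_mul_exp (h : IsKPPFront ω) {X : ℝ} (hX : ∀ z ≤ X, 3 / 4 ≤ ω z) :
    MonotoneOn (fun z => deriv ω z ^ 2 * exp z) (Iic X) := by
  have hd : ∀ z, HasDerivAt (fun z => deriv ω z ^ 2 * exp z)
      (deriv ω z * (2 * (ω z ^ 2 - ω z - 2 * deriv ω z) + deriv ω z) * exp z) z := fun z =>
    (((h.hasDerivAt_deriv z).fun_pow 2).fun_mul (hasDerivAt_exp z)).congr_deriv (by ring)
  refine monotoneOn_of_hasDerivWithinAt_nonneg (convex_Iic X)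
    (fun z _ => (hd z).continuousAt.continuousWithinAt) (fun z _ => (hd z).hasDerivWithinAt)
    (fun z hz => ?_)
  rw [interior_Iic] at hz
  have hωz := hX z (le_of_lt hz)
  have hneg := h.deriv_neg z
  have hslope := h.neg_deriv_lt z
  have hlt := h.lt_one z
  have hfactor : 2 * (ω z ^ 2 - ω z - 2 * deriv ω z) + deriv ω z ≤ 0 := by
    nlinarith [mul_nonneg (sub_nonneg.2 hlt.le) (by linarith : (0:ℝ) ≤ 2 * ω z - 3 / 2)]
  exact mul_nonneg (mul_nonneg_of_nonpos_of_nonpos hneg.le hfactor) (exp_pos z).le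

theorem tiltedDerivSqIntegral_le (h : IsKPPFront ω) {X y : ℝ} (hX : ∀ z ≤ X, 3 / 4 ≤ ω z)
    (hy : y ≤ X) : tiltedDerivSqIntegral ω y ≤ tiltedDeriv ω y ^ 2 := by
  have hsq : ∀ z, tiltedDeriv ω z ^ 2 = deriv ω z ^ 2 * exp z * exp z := fun z => by
    rw [tiltedDeriv]; ring
  have hle : ∀ z ∈ Iic y, tiltedDeriv ω z ^ 2 ≤ deriv ω y ^ 2 * exp y * exp z := fun z hz => by
    rw [hsq]
    exact mul_le_mul_of_nonneg_right (h.monotoneOn_deriv_sq_mul_exp hX (hz.trans hy) hy hz)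
      (exp_pos z).le
  calc tiltedDerivSqIntegral ω y
      ≤ ∫ z in Iic y, deriv ω y ^ 2 * exp y * exp z :=
        setIntegral_mono_on (h.integrableOn_tiltedDeriv_sq y)
          ((integrableOn_exp_Iic y).const_mul _) measurableSet_Iic hle
    _ = tiltedDeriv ω y ^ 2 := by rw [MeasureTheory.integral_const_mul, integral_exp_Iic, hsq]

theorem exists_abs_inv_sq_mul_le (h : IsKPPFront ω) :
    ∃ K, ∀ y ≤ 0, |(tiltedDeriv ω y ^ 2)⁻¹ * tiltedDerivSqIntegral ω y| ≤ K := by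
  obtain ⟨X, hX⟩ := eventually_atBot.1
    (h.tendsto_atBot.eventually (eventually_ge_nhds (by norm_num : (3 / 4 : ℝ) < 1)))
  have hρ : Continuous fun y => (tiltedDeriv ω y ^ 2)⁻¹ * tiltedDerivSqIntegral ω y :=
    continuous_inv_sq_mul h.differentiable_tiltedDeriv.continuous h.tiltedDeriv_ne_zero
      (continuous_iff_continuousAt.2 fun y => (h.hasDerivAt_tiltedDerivSqIntegral y).continuousAt)
  obtain ⟨C, hC⟩ := (isCompact_Icc (a := X) (b := 0)).exists_bound_of_continuousOn hρ.continuousOn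
  refine ⟨max 1 C, fun y hy => ?_⟩
  rcases le_or_gt y X with hyX | hyX
  · have hU2 : 0 < tiltedDeriv ω y ^ 2 := by have := h.tiltedDeriv_ne_zero y; positivity
    have hG : 0 ≤ tiltedDerivSqIntegral ω y :=
      setIntegral_nonneg measurableSet_Iic fun z _ => sq_nonneg _
    rw [abs_of_nonneg (by positivity), inv_mul_le_iff₀ hU2]
    nlinarith [h.tiltedDerivSqIntegral_le hX hyX, le_max_left 1 C]
  · exact (hC y ⟨hyX.le, hy⟩).trans (le_max_right _ _)

theorem kppPsi_bddOn_Iic (h : IsKPPFront ω) : ∃ M, ∀ x ≤ 0, |kppPsi ω x| ≤ M := by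
  obtain ⟨K, hK⟩ := h.exists_abs_inv_sq_mul_le
  have hK0 : 0 ≤ K := (abs_nonneg _).trans (hK 0 le_rfl)
  have hω0 : 0 < 1 - ω 0 := by linarith [h.lt_one 0]
  refine ⟨(1 - ω 0) / 2 * K, fun x hx => ?_⟩
  have hint : |∫ y in (0:ℝ)..x, (tiltedDeriv ω y ^ 2)⁻¹ * tiltedDerivSqIntegral ω y| ≤ K * -x := by
    have := norm_integral_le_of_norm_le_const (a := 0) (b := x)
      (f := fun y => (tiltedDeriv ω y ^ 2)⁻¹ * tiltedDerivSqIntegral ω y) fun y hy =>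
      hK y (by simpa [hx] using hy.2)
    simpa [abs_of_nonpos hx] using this
  have hxexp : -x * exp x ≤ 1 := by
    have h1 := add_one_le_exp (-x)
    have h2 : exp (-x) * exp x = 1 := by rw [← exp_add]; simp
    nlinarith [exp_pos x]
  rw [kppPsi, reductionOfOrder, abs_mul]
  calc |tiltedDeriv ω x| * |∫ y in (0:ℝ)..x, (tiltedDeriv ω y ^ 2)⁻¹ * tiltedDerivSqIntegral ω y|
      ≤ (1 - ω 0) / 2 * exp x * (K * -x) :=
        mul_le_mul (h.abs_tiltedDeriv_le hx) hint (abs_nonneg _) (by positivity)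
    _ = (1 - ω 0) / 2 * K * (-x * exp x) := by ring
    _ ≤ (1 - ω 0) / 2 * K := mul_le_of_le_one_right (by positivity) hxexp

theorem hasDerivAt_kppPsi (h : IsKPPFront ω) (x : ℝ) :
    HasDerivAt (kppPsi ω) (deriv (kppPsi ω) x) x :=
  (hasDerivAt_reductionOfOrder (fun x => (h.differentiable_tiltedDeriv x).hasDerivAt)
    h.tiltedDeriv_ne_zero (continuous_iff_continuousAt.2 fun y =>
      (h.hasDerivAt_tiltedDerivSqIntegral y).continuousAt) x).differentiableAt.hasDerivAt

theorem hasDerivAt_deriv_kppPsi (h : IsKPPFront ω) (x : ℝ) :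
    HasDerivAt (deriv (kppPsi ω)) (2 * ω x * kppPsi ω x + tiltedDeriv ω x) x := by
  have := hasDerivAt_deriv_reductionOfOrder (q := fun x => 2 * ω x)
    (fun x => (h.differentiable_tiltedDeriv x).hasDerivAt) h.hasDerivAt_deriv_tiltedDeriv
    h.tiltedDeriv_ne_zero h.hasDerivAt_tiltedDerivSqIntegral x
  rwa [pow_two, mul_div_cancel_right₀ _ (h.tiltedDeriv_ne_zero x)] at this

theorem kppPsi_ode (h : IsKPPFront ω) (x : ℝ) :
    deriv (deriv (kppPsi ω)) x - 2 * ω x * kppPsi ω x = deriv ω x * exp x := by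
  rw [(h.hasDerivAt_deriv_kppPsi x).deriv, tiltedDeriv]
  ring

theorem eq_kppPsi (h : IsKPPFront ω) {Ψ : ℝ → ℝ} (hΨ : ContDiff ℝ 2 Ψ)
    (hode : ∀ x, deriv (deriv Ψ) x - 2 * ω x * Ψ x = deriv ω x * exp x) (hΨ0 : Ψ 0 = 0)
    (hbdd : ∃ M, ∀ x ≤ 0, |Ψ x| ≤ M) : Ψ = kppPsi ω := by
  obtain ⟨M₁, hM₁⟩ := hbdd
  obtain ⟨M₂, hM₂⟩ := h.kppPsi_bddOn_Iic
  refine sub_eq_zero.1 (eq_zero_of_bddOn_Iic (q := fun x => 2 * ω x)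
    (D' := deriv Ψ - deriv (kppPsi ω))
    (fun x => (h.differentiable_tiltedDeriv x).hasDerivAt) h.hasDerivAt_deriv_tiltedDeriv
    h.tiltedDeriv_ne_zero
    (fun x => (hΨ.differentiable two_ne_zero x).hasDerivAt.sub (h.hasDerivAt_kppPsi x))
    (fun x => ((hΨ.differentiable_deriv_two x).hasDerivAt.sub
      (h.hasDerivAt_deriv_kppPsi x)).congr_deriv ?_)
    (by simp [hΨ0, kppPsi_zero])
    ⟨M₁ + M₂, fun x hx => (abs_sub _ _).trans (add_le_add (hM₁ x hx) (hM₂ x hx))⟩)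
  simp only [Pi.sub_apply, tiltedDeriv]
  linear_combination hode x

theorem kppPsi_comp_const_add (h : IsKPPFront ω) (c x : ℝ) :
    kppPsi (fun z => ω (c + z)) x = exp (-c) *
      (kppPsi ω (c + x) - tiltedDeriv ω (c + x) / tiltedDeriv ω c * kppPsi ω c) := by
  have hU : tiltedDeriv (fun z => ω (c + z)) = fun x => exp (-c) * tiltedDeriv ω (c + x) :=
    funext (tiltedDeriv_comp_const_add ω c)
  have hG : tiltedDerivSqIntegral (fun z => ω (c + z))
      = fun y => exp (-c) ^ 2 * tiltedDerivSqIntegral ω (c + y) :=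
    funext (tiltedDerivSqIntegral_comp_const_add ω c)
  rw [kppPsi, hU, hG]
  exact reductionOfOrder_comp_const_add h.differentiable_tiltedDeriv.continuous
    h.tiltedDeriv_ne_zero (continuous_iff_continuousAt.2 fun y =>
      (h.hasDerivAt_tiltedDerivSqIntegral y).continuousAt) (exp_ne_zero _) c x

end IsKPPFront

theorem stmt_17_general
    (ω : ℝ → ℝ)
    (hω_smooth : ContDiff ℝ 2 ω)
    (hω_eq : ∀ x, deriv (deriv ω) x + 2 * deriv ω x + ω x - (ω x) ^ 2 = 0)
    (hω_bot : Tendsto ω atBot (nhds 1))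
    (hω_deriv : ∀ x, deriv ω x < 0)
    (Wα : ℝ)
    (Φ : ℝ → ℝ)
    (hΦ : ∀ x, Φ x = deriv ω x *
      ∫ y in (0:ℝ)..x, (Real.exp (-(2 * y)) / (deriv ω y) ^ 2) *
        ∫ z in Set.Iic y, (deriv ω z) ^ 2 * Real.exp (2 * z))
    (Ψ : ℝ → ℝ)
    (hΨ : ∀ x, Ψ x = deriv ω (Wα + x) * Real.exp x *
      ∫ y in (0:ℝ)..x, ((deriv ω (Wα + y)) ^ 2 * Real.exp (2 * y))⁻¹ *
        ∫ z in Set.Iic y, (deriv ω (Wα + z)) ^ 2 * Real.exp (2 * z)) :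
    (∀ x, deriv (deriv Ψ) x - 2 * ω (Wα + x) * Ψ x = deriv ω (Wα + x) * Real.exp x) ∧
    Ψ 0 = 0 ∧
    (∃ M : ℝ, ∀ x ≤ (0:ℝ), |Ψ x| ≤ M) ∧
    (∀ Ψ₂ : ℝ → ℝ, ContDiff ℝ 2 Ψ₂ →
      (∀ x, deriv (deriv Ψ₂) x - 2 * ω (Wα + x) * Ψ₂ x = deriv ω (Wα + x) * Real.exp x) →
      Ψ₂ 0 = 0 → (∃ M : ℝ, ∀ x ≤ (0:ℝ), |Ψ₂ x| ≤ M) → Ψ₂ = Ψ) ∧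
    (∀ x, Ψ x = Real.exp x *
      (Φ (Wα + x) - Φ Wα / deriv ω Wα * deriv ω (Wα + x))) := by
  have hω : IsKPPFront ω := ⟨hω_smooth, hω_eq, hω_bot, hω_deriv⟩
  have hωW := hω.comp_const_add Wα
  have hderiv : ∀ x, deriv (fun x => ω (Wα + x)) x = deriv ω (Wα + x) :=
    deriv_comp_const_add ω Wα
  obtain rfl : Ψ = kppPsi fun x => ω (Wα + x) := funext fun x => by
    simp only [hΨ, kppPsi, reductionOfOrder, tiltedDerivSqIntegral, tiltedDeriv, mul_exp_sq,
      hderiv]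
  refine ⟨fun x => by simpa only [hderiv] using hωW.kppPsi_ode x, kppPsi_zero _,
    hωW.kppPsi_bddOn_Iic,
    fun Ψ₂ h2 hode h0 hbdd => hωW.eq_kppPsi h2 (by simpa only [hderiv] using hode) h0 hbdd,
    fun x => ?_⟩
  have hW := (hω.deriv_neg Wα).ne
  rw [hω.kppPsi_comp_const_add, eq_exp_neg_mul_kppPsi hΦ, eq_exp_neg_mul_kppPsi hΦ, tiltedDeriv,
    tiltedDeriv]
  simp only [exp_add, exp_neg]
  field_simp

theorem stmt_17
    (ω : ℝ → ℝ)
    (hω_smooth : ContDiff ℝ 2 ω)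
    (hω_eq : ∀ x, deriv (deriv ω) x + 2 * deriv ω x + ω x - (ω x) ^ 2 = 0)
    (hω_bot : Tendsto ω atBot (nhds 1))
    (hω_top : Tendsto ω atTop (nhds 0))
    (hω_half : ω 0 = 1 / 2)
    (hω_deriv : ∀ x, deriv ω x < 0)
    (α : ℝ) (hα : α ∈ Set.Ioo (0 : ℝ) 1)
    (Wα : ℝ) (hWα : ω Wα = α)
    (Φ : ℝ → ℝ)
    (hΦ : ∀ x, Φ x = deriv ω x *
      ∫ y in (0:ℝ)..x, (Real.exp (-(2 * y)) / (deriv ω y) ^ 2) *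
        ∫ z in Set.Iic y, (deriv ω z) ^ 2 * Real.exp (2 * z))
    (Ψ : ℝ → ℝ)
    (hΨ : ∀ x, Ψ x = deriv ω (Wα + x) * Real.exp x *
      ∫ y in (0:ℝ)..x, ((deriv ω (Wα + y)) ^ 2 * Real.exp (2 * y))⁻¹ *
        ∫ z in Set.Iic y, (deriv ω (Wα + z)) ^ 2 * Real.exp (2 * z)) :
    (∀ x, deriv (deriv Ψ) x - 2 * ω (Wα + x) * Ψ x = deriv ω (Wα + x) * Real.exp x) ∧
    Ψ 0 = 0 ∧
    (∃ M : ℝ, ∀ x ≤ (0:ℝ), |Ψ x| ≤ M) ∧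
    (∀ Ψ₂ : ℝ → ℝ, ContDiff ℝ 2 Ψ₂ →
      (∀ x, deriv (deriv Ψ₂) x - 2 * ω (Wα + x) * Ψ₂ x = deriv ω (Wα + x) * Real.exp x) →
      Ψ₂ 0 = 0 → (∃ M : ℝ, ∀ x ≤ (0:ℝ), |Ψ₂ x| ≤ M) → Ψ₂ = Ψ) ∧
    (∀ x, Ψ x = Real.exp x *
      (Φ (Wα + x) - Φ Wα / deriv ω Wα * deriv ω (Wα + x))) :=
  stmt_17_general ω hω_smooth hω_eq hω_bot hω_deriv Wα Φ hΦ Ψ hΨ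
end

section
/- (Asymptotics used in the proof of Theorem 2.) The function x ↦ ω'(x)e^x satisfies the linear equation (ω'(x)e^x)'' − 2ω(x)(ω'(x)e^x) = 0 for all x ∈ ℝ, and there exists a constant C ≠ 0 such that ω'(x) e^x e^{−√2 x} → C as x → −∞; in particular z ↦ ω'(z)² e^{2z} is integrable on every half-line (−∞, y]. -/
/-!
By the travelling-wave equation, `v = ω' eˣ` has `v' = (ω² - ω - ω') eˣ` and `v'' = 2ωv`.
Comparing with `ω < 1` shows `v, v' < 0` and `v, v' → 0` at `-∞`. The quantities
`v'² - 2ωv²` and `(v' - √2 v) e^{√2 x}` are increasing and vanish at `-∞`, which pins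
`v'/v` between `√2 ω` and `√2`. So `log (-v) - √2 x` is nonincreasing, and it is bounded
above because its slope is at least `-2√2 ω(1 - ω)`, which is integrable at `-∞`. Its limit
gives `C`, and its bound gives `v² ≤ K e^{2√2 x}`.
-/

open Filter MeasureTheory Set Real Topology

theorem tendsto_atBot_atTop_of_hasDerivAt_le {f g f' g' : ℝ → ℝ}
    (hf : ∀ x, HasDerivAt f (f' x) x) (hg : ∀ x, HasDerivAt g (g' x) x)
    (hle : ∀ᶠ x in atBot, f' x ≤ g' x) (hg_top : Tendsto g atBot atTop) :
    Tendsto f atBot atTop := by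
  obtain ⟨X, hX⟩ := eventually_atBot.1 hle
  have hanti : AntitoneOn (fun x => f x - g x) (Iic X) :=
    antitoneOn_of_hasDerivWithinAt_nonpos (convex_Iic X)
      (fun x _ => ((hf x).sub (hg x)).continuousAt.continuousWithinAt)
      (fun x _ => ((hf x).sub (hg x)).hasDerivWithinAt)
      (fun x hx => sub_nonpos.2 (hX x (interior_subset (s := Iic X) hx)))
  refine tendsto_atTop_mono' atBot ?_ (tendsto_atTop_add_const_right _ (f X - g X) hg_top)
  filter_upwards [eventually_le_atBot X] with x hx
  linarith [hanti hx self_mem_Iic hx]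

theorem Antitone.tendsto_atBot_of_le_of_forall_lt {ι α : Type*} [Preorder ι]
    [TopologicalSpace α] [LinearOrder α] [OrderTopology α] {f : ι → α} {a : α}
    (hf : Antitone f) (hle : ∀ i, f i ≤ a) (hlt : ∀ c < a, ∃ i, c < f i) :
    Tendsto f atBot (𝓝 a) :=
  tendsto_atBot_isLUB hf ⟨forall_mem_range.2 hle, fun _ hb => not_lt.1 fun hba =>
    let ⟨i, hi⟩ := hlt _ hba; (hb ⟨i, rfl⟩).not_gt hi⟩

theorem nonneg_of_hasDerivAt_nonneg_of_tendsto_atBot {f f' : ℝ → ℝ}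
    (hf : ∀ x, HasDerivAt f (f' x) x) (hf' : ∀ x, 0 ≤ f' x)
    (hlim : Tendsto f atBot (𝓝 0)) (x : ℝ) : 0 ≤ f x :=
  (monotone_of_hasDerivAt_nonneg hf hf').le_of_tendsto hlim x

structure IsCriticalWave (ω : ℝ → ℝ) : Prop where
  contDiff : ContDiff ℝ 2 ω
  ode : ∀ x, deriv (deriv ω) x + 2 * deriv ω x + ω x - ω x ^ 2 = 0
  tendsto_atBot_one : Tendsto ω atBot (𝓝 1)
  tendsto_atTop_zero : Tendsto ω atTop (𝓝 0)
  map_zero : ω 0 = 1 / 2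
  deriv_neg : ∀ x, deriv ω x < 0

namespace IsCriticalWave

variable {ω : ℝ → ℝ}

theorem differentiable (hω : IsCriticalWave ω) : Differentiable ℝ ω :=
  hω.contDiff.differentiable (by norm_num)

theorem differentiable_deriv (hω : IsCriticalWave ω) : Differentiable ℝ (deriv ω) :=
  hω.contDiff.differentiable_deriv_two

theorem deriv_deriv_eq (hω : IsCriticalWave ω) (x : ℝ) :
    deriv (deriv ω) x = ω x ^ 2 - ω x - 2 * deriv ω x := by
  linarith [hω.ode x]

theorem strictAnti (hω : IsCriticalWave ω) : StrictAnti ω :=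
  strictAnti_of_deriv_neg hω.deriv_neg

theorem lt_one (hω : IsCriticalWave ω) (x : ℝ) : ω x < 1 :=
  (hω.strictAnti (sub_one_lt x)).trans_le
    (hω.strictAnti.antitone.ge_of_tendsto hω.tendsto_atBot_one _)

theorem pos (hω : IsCriticalWave ω) (x : ℝ) : 0 < ω x :=
  (hω.strictAnti.antitone.le_of_tendsto hω.tendsto_atTop_zero _).trans_lt
    (hω.strictAnti (lt_add_one x))

noncomputable def v (ω : ℝ → ℝ) (x : ℝ) : ℝ := deriv ω x * exp x

noncomputable def dv (ω : ℝ → ℝ) (x : ℝ) : ℝ := (ω x ^ 2 - ω x - deriv ω x) * exp x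

theorem hasDerivAt_v (hω : IsCriticalWave ω) (x : ℝ) : HasDerivAt (v ω) (dv ω x) x :=
  ((hω.differentiable_deriv x).hasDerivAt.mul (hasDerivAt_exp x)).congr_deriv <| by
    rw [dv, hω.deriv_deriv_eq]
    ring

theorem hasDerivAt_dv (hω : IsCriticalWave ω) (x : ℝ) :
    HasDerivAt (dv ω) (2 * ω x * v ω x) x := by
  have hω' := (hω.differentiable x).hasDerivAt
  refine ((((hω'.fun_pow 2).fun_sub hω').fun_sub (hω.differentiable_deriv x).hasDerivAt).fun_mul
    (hasDerivAt_exp x)).congr_deriv ?_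
  rw [v, hω.deriv_deriv_eq]
  ring

theorem deriv_deriv_v (hω : IsCriticalWave ω) (x : ℝ) :
    deriv (deriv (v ω)) x = 2 * ω x * v ω x := by
  rw [funext fun y => (hω.hasDerivAt_v y).deriv, (hω.hasDerivAt_dv x).deriv]

theorem v_neg (hω : IsCriticalWave ω) (x : ℝ) : v ω x < 0 :=
  mul_neg_of_neg_of_pos (hω.deriv_neg x) (exp_pos x)

theorem deriv_eq_v_mul_exp_neg (x : ℝ) : deriv ω x = v ω x * exp (-x) := by
  rw [v, mul_assoc, ← exp_add, add_neg_cancel, exp_zero, mul_one]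

theorem strictAnti_dv (hω : IsCriticalWave ω) : StrictAnti (dv ω) :=
  strictAnti_of_hasDerivAt_neg hω.hasDerivAt_dv fun x =>
    mul_neg_of_pos_of_neg (by linarith [hω.pos x]) (hω.v_neg x)

/-- Otherwise `ω' ≤ c e^{-x}` near `-∞` would make `ω` unbounded. -/
theorem frequently_lt_v (hω : IsCriticalWave ω) {c : ℝ} (hc : c < 0) :
    ∃ᶠ x in atBot, c < v ω x := by
  intro hle
  have hexp : ∀ x, HasDerivAt (fun y => -c * exp (-y)) (c * exp (-x)) x := fun x => by
    simpa using ((hasDerivAt_neg x).exp).const_mul (-c)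
  refine not_tendsto_atTop_of_tendsto_nhds hω.tendsto_atBot_one <|
    tendsto_atBot_atTop_of_hasDerivAt_le (fun x => (hω.differentiable x).hasDerivAt) hexp
      (hle.mono fun x hx => ?_) ?_
  · rw [deriv_eq_v_mul_exp_neg]
    exact mul_le_mul_of_nonneg_right (not_lt.1 hx) (exp_pos _).le
  · exact (tendsto_exp_atTop.comp tendsto_neg_atBot_atTop).const_mul_atTop (neg_pos.2 hc)

theorem dv_neg (hω : IsCriticalWave ω) (x : ℝ) : dv ω x < 0 := by
  by_contra! hx
  set δ := dv ω (x - 1)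
  have hδ : 0 < δ := hx.trans_lt (hω.strictAnti_dv (sub_one_lt x))
  have hv : Tendsto (fun y => -v ω y) atBot atTop :=
    tendsto_atBot_atTop_of_hasDerivAt_le (fun y => (hω.hasDerivAt_v y).neg)
      (fun _ => hasDerivAt_const_mul (-δ))
      ((eventually_le_atBot (x - 1)).mono fun _ hy => neg_le_neg (hω.strictAnti_dv.antitone hy))
      (tendsto_id.const_mul_atBot_of_neg (neg_neg_of_pos hδ))
  obtain ⟨y, hy, hy'⟩ :=
    ((hω.frequently_lt_v neg_one_lt_zero).and_eventually (tendsto_atTop.1 hv 1)).exists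
  linarith

theorem strictAnti_v (hω : IsCriticalWave ω) : StrictAnti (v ω) :=
  strictAnti_of_hasDerivAt_neg hω.hasDerivAt_v hω.dv_neg

theorem tendsto_v (hω : IsCriticalWave ω) : Tendsto (v ω) atBot (𝓝 0) :=
  hω.strictAnti_v.antitone.tendsto_atBot_of_le_of_forall_lt (fun x => (hω.v_neg x).le)
    fun _ hc => (hω.frequently_lt_v hc).exists

theorem tendsto_dv (hω : IsCriticalWave ω) : Tendsto (dv ω) atBot (𝓝 0) := by
  refine hω.strictAnti_dv.antitone.tendsto_atBot_of_le_of_forall_lt (fun x => (hω.dv_neg x).le)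
    fun c hc => ?_
  by_contra! hle
  have hv : Tendsto (v ω) atBot atTop :=
    tendsto_atBot_atTop_of_hasDerivAt_le hω.hasDerivAt_v (fun _ => hasDerivAt_const_mul c)
      (.of_forall hle)
      (tendsto_id.const_mul_atBot_of_neg hc)
  obtain ⟨y, hy⟩ := (tendsto_atTop.1 hv 0).exists
  linarith [hω.v_neg y]

theorem two_mul_mul_v_sq_le_dv_sq (hω : IsCriticalWave ω) (x : ℝ) :
    2 * ω x * v ω x ^ 2 ≤ dv ω x ^ 2 := by
  have hE : ∀ y, HasDerivAt (fun y => dv ω y ^ 2 - 2 * ω y * v ω y ^ 2)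
      (-2 * deriv ω y * v ω y ^ 2) y := fun y => by
    refine (((hω.hasDerivAt_dv y).fun_pow 2).fun_sub
      (((hω.differentiable y).hasDerivAt.const_mul 2).fun_mul
        ((hω.hasDerivAt_v y).fun_pow 2))).congr_deriv ?_
    ring
  have hlim : Tendsto (fun y => dv ω y ^ 2 - 2 * ω y * v ω y ^ 2) atBot (𝓝 0) := by
    simpa using (hω.tendsto_dv.pow 2).sub
      ((tendsto_const_nhds.mul hω.tendsto_atBot_one).mul (hω.tendsto_v.pow 2))
  have := nonneg_of_hasDerivAt_nonneg_of_tendsto_atBot hE (fun y => by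
    nlinarith [hω.deriv_neg y, sq_nonneg (v ω y)]) hlim x
  linarith

theorem sqrt_two_mul_v_le_dv (hω : IsCriticalWave ω) (x : ℝ) :
    √2 * v ω x ≤ dv ω x := by
  have hs : √2 * √2 = 2 := mul_self_sqrt zero_le_two
  have hM : ∀ y, HasDerivAt (fun y => (dv ω y - √2 * v ω y) * exp (√2 * y))
      (2 * (ω y - 1) * v ω y * exp (√2 * y)) y := fun y => by
    refine (((hω.hasDerivAt_dv y).fun_sub ((hω.hasDerivAt_v y).const_mul √2)).fun_mul
      ((hasDerivAt_const_mul √2).exp)).congr_deriv ?_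
    linear_combination (-(v ω y * exp (√2 * y))) * hs
  have hlim : Tendsto (fun y => (dv ω y - √2 * v ω y) * exp (√2 * y)) atBot (𝓝 0) := by
    simpa using (hω.tendsto_dv.sub (hω.tendsto_v.const_mul √2)).mul
      (tendsto_exp_atBot.comp (tendsto_id.const_mul_atBot (by positivity)))
  have := nonneg_of_hasDerivAt_nonneg_of_tendsto_atBot hM (fun y =>
    mul_nonneg (mul_nonneg_of_nonpos_of_nonpos (by linarith [hω.lt_one y]) (hω.v_neg y).le)
      (exp_pos _).le) hlim x
  nlinarith [exp_pos (√2 * x)]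

theorem sqrt_two_mul_le_dv_div_v (hω : IsCriticalWave ω) (x : ℝ) :
    √2 * ω x ≤ dv ω x / v ω x := by
  rw [le_div_iff_of_neg (hω.v_neg x)]
  have hs : √2 ^ 2 = 2 := sq_sqrt zero_le_two
  have hωv : 2 * ω x ^ 2 * v ω x ^ 2 ≤ 2 * ω x * v ω x ^ 2 := by
    nlinarith [mul_nonneg (mul_nonneg (hω.pos x).le (sq_nonneg (v ω x)))
      (sub_nonneg.2 (hω.lt_one x).le)]
  have hsv : √2 * ω x * v ω x < 0 :=
    mul_neg_of_pos_of_neg (mul_pos (by positivity) (hω.pos x)) (hω.v_neg x)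
  nlinarith [hω.two_mul_mul_v_sq_le_dv_sq x, hω.dv_neg x]

noncomputable def logAmplitude (ω : ℝ → ℝ) (x : ℝ) : ℝ := log (-v ω x) - √2 * x

theorem hasDerivAt_logAmplitude (hω : IsCriticalWave ω) (x : ℝ) :
    HasDerivAt (logAmplitude ω) (dv ω x / v ω x - √2) x :=
  (((hω.hasDerivAt_v x).fun_neg.log (neg_pos.2 (hω.v_neg x)).ne').fun_sub
    (hasDerivAt_const_mul √2)).congr_deriv (by rw [neg_div_neg_eq])

theorem antitone_logAmplitude (hω : IsCriticalWave ω) : Antitone (logAmplitude ω) :=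
  antitone_of_hasDerivAt_nonpos hω.hasDerivAt_logAmplitude fun x =>
    sub_nonpos.2 <| (div_le_iff_of_neg (hω.v_neg x)).2 (hω.sqrt_two_mul_v_le_dv x)

/-- `F = 2(1 - ω) - ω'` is a positive antiderivative of `ω(1 - ω)`; on `x ≤ 0`, where
`ω ≥ 1/2`, the slope of `logAmplitude` is at least `-2√2 ω(1 - ω)`. -/
theorem bddAbove_range_logAmplitude (hω : IsCriticalWave ω) :
    BddAbove (range (logAmplitude ω)) := by
  set F : ℝ → ℝ := fun y => 2 * (1 - ω y) - deriv ω y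
  have hF : ∀ y, HasDerivAt F (ω y - ω y ^ 2) y := fun y =>
    ((((hasDerivAt_const y 1).sub (hω.differentiable y).hasDerivAt).const_mul 2).fun_sub
      (hω.differentiable_deriv y).hasDerivAt).congr_deriv (by rw [hω.deriv_deriv_eq]; ring)
  have hFpos : ∀ y, 0 < F y := fun y => by linarith [hω.lt_one y, hω.deriv_neg y]
  have hG : ∀ y, HasDerivAt (fun y => logAmplitude ω y + 2 * √2 * F y)
      (dv ω y / v ω y - √2 + 2 * √2 * (ω y - ω y ^ 2)) y := fun y =>
    (hω.hasDerivAt_logAmplitude y).fun_add ((hF y).const_mul _)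
  have hmono : MonotoneOn (fun y => logAmplitude ω y + 2 * √2 * F y) (Iic 0) := by
    refine monotoneOn_of_hasDerivWithinAt_nonneg (convex_Iic 0)
      (fun y _ => (hG y).continuousAt.continuousWithinAt) (fun y _ => (hG y).hasDerivWithinAt)
      fun y hy => ?_
    rw [interior_Iic] at hy
    have hhalf : 1 / 2 ≤ ω y := hω.map_zero ▸ hω.strictAnti.antitone (le_of_lt hy)
    have := mul_nonneg (mul_nonneg (sqrt_nonneg 2) (sub_nonneg.2 (hω.lt_one y).le))
      (by linarith : 0 ≤ 2 * ω y - 1)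
    nlinarith [hω.sqrt_two_mul_le_dv_div_v y]
  refine ⟨logAmplitude ω 0 + 2 * √2 * F 0, forall_mem_range.2 fun x => ?_⟩
  rcases le_or_gt x 0 with hx | hx
  · have := hmono hx self_mem_Iic hx
    have : 0 ≤ 2 * √2 * F x := by positivity [hFpos x]
    linarith
  · have : 0 ≤ 2 * √2 * F 0 := by positivity [hFpos 0]
    linarith [hω.antitone_logAmplitude hx.le]

theorem v_eq_neg_exp (hω : IsCriticalWave ω) (x : ℝ) :
    v ω x = -exp (logAmplitude ω x + √2 * x) := by
  rw [logAmplitude, sub_add_cancel, exp_log (neg_pos.2 (hω.v_neg x)), neg_neg]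

theorem tendsto_v_mul_exp_neg (hω : IsCriticalWave ω) :
    Tendsto (fun x => v ω x * exp (-(√2 * x))) atBot
      (𝓝 (-exp (⨆ x, logAmplitude ω x))) := by
  have hv : ∀ x, v ω x * exp (-(√2 * x)) = -exp (logAmplitude ω x) := fun x => by
    rw [hω.v_eq_neg_exp, neg_mul, ← exp_add, add_neg_cancel_right]
  simp_rw [hv]
  exact ((continuous_exp.tendsto _).comp
    (tendsto_atBot_ciSup hω.antitone_logAmplitude hω.bddAbove_range_logAmplitude)).neg

theorem integrableOn_deriv_sq_mul_exp (hω : IsCriticalWave ω) (y : ℝ) :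
    IntegrableOn (fun x => deriv ω x ^ 2 * exp (2 * x)) (Iic y) := by
  obtain ⟨B, hB⟩ := hω.bddAbove_range_logAmplitude
  have hv : ∀ x, deriv ω x ^ 2 * exp (2 * x) = v ω x ^ 2 := fun x => by
    rw [v, mul_pow, ← exp_nat_mul]
    norm_num
  simp_rw [hv]
  refine Integrable.mono' ((integrableOn_exp_mul_Iic (a := 2 * √2) (by positivity) y).const_mul
    (exp (2 * B))) (Continuous.aestronglyMeasurable ?_) (ae_of_all _ fun x => ?_)
  · exact (continuous_iff_continuousAt.2 fun x => (hω.hasDerivAt_v x).continuousAt).pow 2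
  · rw [norm_pow, norm_eq_abs, sq_abs, hω.v_eq_neg_exp, neg_sq, ← exp_nat_mul, ← exp_add]
    gcongr
    have := hB ⟨x, rfl⟩
    push_cast
    linarith

end IsCriticalWave

theorem stmt_18
    (ω : ℝ → ℝ)
    (hω_smooth : ContDiff ℝ 2 ω)
    (hω_eq : ∀ x, deriv (deriv ω) x + 2 * deriv ω x + ω x - (ω x) ^ 2 = 0)
    (hω_bot : Tendsto ω atBot (nhds 1))
    (hω_top : Tendsto ω atTop (nhds 0))
    (hω_half : ω 0 = 1 / 2)
    (hω_deriv : ∀ x, deriv ω x < 0)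
    :
    (∀ x, deriv (deriv (fun y => deriv ω y * Real.exp y)) x
        - 2 * ω x * (deriv ω x * Real.exp x) = 0) ∧
    (∃ C : ℝ, C ≠ 0 ∧
      Tendsto (fun x => deriv ω x * Real.exp x * Real.exp (-(Real.sqrt 2 * x)))
        atBot (nhds C)) ∧
    (∀ y : ℝ, IntegrableOn (fun z => (deriv ω z) ^ 2 * Real.exp (2 * z)) (Set.Iic y)) := by
  have hω : IsCriticalWave ω := ⟨hω_smooth, hω_eq, hω_bot, hω_top, hω_half, hω_deriv⟩
  exact ⟨fun x => sub_eq_zero.2 (hω.deriv_deriv_v x),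
    ⟨_, neg_ne_zero.2 (exp_pos _).ne', hω.tendsto_v_mul_exp_neg⟩,
    hω.integrableOn_deriv_sq_mul_exp⟩
end
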